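/- arXiv:1804.00110 — 6 statements merged into one kernel-verified Lean document; each statement's English description precedes it below -/
import Mathlib

section
/- Let H be a complex Hilbert space and let (F_k)_{k ∈ ℕ} be a sequence of bounded linear operators on H that are mutually orthogonal, i.e. F_j ∘ (F_k)* = 0 and (F_j)* ∘ F_k = 0 for all j ≠ k, and suppose c := sup_k ‖F_k‖ < ∞. Then the partial sums Σ_{k<n} F_k converge as n → ∞ in the strong operator topology (i.e. pointwise in norm on H) to a bounded linear operator F, and this limit satisfies ‖F‖ = c. -/
open scoped ComplexConjugate

open ContinuousLinearMap in
lemma aux_sum_pow {R : Type*} [Ring R] {ι : Type*} (s : Finset ι) (G : ι → R)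
    (h : ∀ j ∈ s, ∀ k ∈ s, j ≠ k → G j * G k = 0) (n : ℕ) :
    (∑ k ∈ s, G k) ^ (n + 1) = ∑ k ∈ s, G k ^ (n + 1) := by
  induction n with
  | zero => simp
  | succ n ih =>
    rw [pow_succ, ih, Finset.sum_mul_sum]
    refine Finset.sum_congr rfl (fun j hj => ?_)
    rw [Finset.sum_eq_single j (fun k hk hkj =>
      by rw [pow_succ, mul_assoc, h j hj k hk (Ne.symm hkj), mul_zero])
      (fun hj' => absurd hj hj'), ← pow_succ]

lemma aux_le_of_pow_le {x y C : ℝ} (hy : 0 < y)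
    (h : ∀ n : ℕ, x ^ 2 ^ n ≤ C * y ^ 2 ^ n) : x ≤ y := by
  by_contra hxy
  push_neg at hxy
  have hr : 1 < x / y := (one_lt_div hy).2 hxy
  have h2 : Filter.Tendsto (fun n : ℕ => 2 ^ n) Filter.atTop Filter.atTop :=
    tendsto_pow_atTop_atTop_of_one_lt one_lt_two
  have hT := (tendsto_pow_atTop_atTop_of_one_lt hr).comp h2
  obtain ⟨n, hn⟩ := (hT.eventually_gt_atTop C).exists
  have hle : (x / y) ^ 2 ^ n ≤ C := by
    rw [div_pow, div_le_iff₀ (by positivity)]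
    exact h n
  exact absurd hle (not_le.2 hn)

/-- Mutually orthogonal operators: `‖∑ k ∈ s, F k‖ ≤ c` if `‖F k‖ ≤ c` for all `k`. -/
lemma aux_opnorm {H : Type*} [NormedAddCommGroup H] [InnerProductSpace ℂ H]
    [CompleteSpace H] (F : ℕ → H →L[ℂ] H)
    (horth : ∀ j k, j ≠ k →
      F j ∘L ContinuousLinearMap.adjoint (F k) = 0 ∧
      ContinuousLinearMap.adjoint (F j) ∘L F k = 0)
    {c : ℝ} (hc : ∀ k, ‖F k‖ ≤ c) (s : Finset ℕ) : ‖∑ k ∈ s, F k‖ ≤ c := by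
  have hc0 : 0 ≤ c := (norm_nonneg (F 0)).trans (hc 0)
  rcases eq_or_lt_of_le hc0 with hc0' | hcpos
  · have hz : ∀ k, F k = 0 := fun k =>
      norm_le_zero_iff.mp (by rw [hc0']; exact hc k)
    simp only [hz, Finset.sum_const_zero, norm_zero]
    exact hc0
  set T : H →L[ℂ] H := ∑ k ∈ s, F k with hT
  set G : ℕ → H →L[ℂ] H := fun k => star (F k) * F k with hG
  have hstar : ∀ j k, j ≠ k → star (F j) * F k = 0 := fun j k hjk => by
    rw [ContinuousLinearMap.mul_def, ContinuousLinearMap.star_eq_adjoint]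
    exact (horth j k hjk).2
  have hmul : ∀ j k, j ≠ k → F j * star (F k) = 0 := fun j k hjk => by
    rw [ContinuousLinearMap.mul_def, ContinuousLinearMap.star_eq_adjoint]
    exact (horth j k hjk).1
  have hA : star T * T = ∑ k ∈ s, G k := by
    rw [hT, star_sum, Finset.sum_mul_sum]
    refine Finset.sum_congr rfl (fun j hj => ?_)
    exact Finset.sum_eq_single j (fun k hk hkj => hstar j k (Ne.symm hkj))
      (fun hj' => absurd hj hj')
  have hGmul : ∀ j ∈ s, ∀ k ∈ s, j ≠ k → G j * G k = 0 := by
    intro j _ k _ hjk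
    have : G j * G k = star (F j) * ((F j * star (F k)) * F k) := by
      simp only [hG, mul_assoc]
    rw [this, hmul j k hjk, zero_mul, mul_zero]
  have hGnorm : ∀ k, ‖G k‖ ≤ c * c := fun k => by
    rw [hG, CStarRing.norm_star_mul_self]
    exact mul_le_mul (hc k) (hc k) (norm_nonneg _) hc0
  have hsa : IsSelfAdjoint (star T * T) := IsSelfAdjoint.star_mul_self T
  have key : ∀ n : ℕ, ‖star T * T‖ ^ 2 ^ n ≤ (s.card : ℝ) * (c * c) ^ 2 ^ n := by
    intro n
    have h1 : ‖star T * T‖ ^ 2 ^ n = ‖(star T * T) ^ 2 ^ n‖ := by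
      have := hsa.nnnorm_pow_two_pow n
      have := congrArg (fun x : NNReal => (x : ℝ)) this
      push_cast at this
      exact this.symm
    have h2 : (star T * T) ^ 2 ^ n = ∑ k ∈ s, G k ^ 2 ^ n := by
      have hpos : 0 < 2 ^ n := Nat.pow_pos (by norm_num)
      rw [hA, ← Nat.succ_pred_eq_of_pos hpos, aux_sum_pow s G hGmul]
    rw [h1, h2]
    calc ‖∑ k ∈ s, G k ^ 2 ^ n‖ ≤ ∑ k ∈ s, ‖G k ^ 2 ^ n‖ := norm_sum_le _ _
      _ ≤ ∑ _k ∈ s, (c * c) ^ 2 ^ n := Finset.sum_le_sum (fun k _ =>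
          (norm_pow_le' _ (Nat.pow_pos (by norm_num))).trans
            (pow_le_pow_left₀ (norm_nonneg _) (hGnorm k) _))
      _ = (s.card : ℝ) * (c * c) ^ 2 ^ n := by
          rw [Finset.sum_const, nsmul_eq_mul]
  have hAle : ‖star T * T‖ ≤ c * c := aux_le_of_pow_le (by positivity) key
  rw [CStarRing.norm_star_mul_self] at hAle
  nlinarith [norm_nonneg T]

/-- Let `H` be a complex Hilbert space and `(F k)` a sequence of bounded
linear operators on `H` that are mutually orthogonal (`F j ∘ (F k)* = 0` and
`(F j)* ∘ F k = 0` for `j ≠ k`), with `c = ⨆ k, ‖F k‖ < ∞`.  Then the partial sums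
`∑_{k<n} F k` converge in the strong operator topology to a bounded operator `Fop`
with `‖Fop‖ = c`. -/
theorem statement0 {H : Type*} [NormedAddCommGroup H] [InnerProductSpace ℂ H]
    [CompleteSpace H] (F : ℕ → H →L[ℂ] H)
    (horth : ∀ j k, j ≠ k →
      F j ∘L ContinuousLinearMap.adjoint (F k) = 0 ∧
      ContinuousLinearMap.adjoint (F j) ∘L F k = 0)
    (hbdd : BddAbove (Set.range fun k => ‖F k‖)) :
    ∃ Fop : H →L[ℂ] H,
      (∀ v : H, Filter.Tendsto (fun n => ∑ k ∈ Finset.range n, F k v)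
        Filter.atTop (nhds (Fop v))) ∧
      ‖Fop‖ = ⨆ k, ‖F k‖ := by
  set c : ℝ := ⨆ k, ‖F k‖ with hcdef
  have hc : ∀ k, ‖F k‖ ≤ c := fun k => le_ciSup hbdd k
  have hc0 : 0 ≤ c := (norm_nonneg (F 0)).trans (hc 0)
  -- pointwise orthogonality of ranges
  have hinner : ∀ (j k : ℕ), j ≠ k → ∀ v : H,
      (inner ℂ (F j v) (F k v) : ℂ) = 0 := by
    intro j k hjk v
    have h0 := (horth k j (Ne.symm hjk)).2
    have : (inner ℂ (F j v) (F k v) : ℂ) =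
        inner ℂ ((ContinuousLinearMap.adjoint (F k) ∘L F j) v) v := by
      rw [ContinuousLinearMap.coe_comp', Function.comp_apply,
        ContinuousLinearMap.adjoint_inner_left]
    rw [this, h0]
    simp
  -- norm expansion over finsets
  have hexp : ∀ (s : Finset ℕ) (v : H),
      ‖∑ k ∈ s, F k v‖ ^ 2 = ∑ k ∈ s, ‖F k v‖ ^ 2 := by
    intro s v
    have h1 : (inner ℂ (∑ k ∈ s, F k v) (∑ k ∈ s, F k v) : ℂ) =
        ∑ k ∈ s, inner ℂ (F k v) (F k v) := by
      rw [sum_inner]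
      refine Finset.sum_congr rfl (fun j hj => ?_)
      rw [inner_sum]
      exact Finset.sum_eq_single j (fun k hk hkj => hinner j k (Ne.symm hkj) v)
        (fun hj' => absurd hj hj')
    have h2 : RCLike.re (inner ℂ (∑ k ∈ s, F k v) (∑ k ∈ s, F k v) : ℂ) =
        RCLike.re (∑ k ∈ s, (inner ℂ (F k v) (F k v) : ℂ)) := by rw [h1]
    rwa [inner_self_eq_norm_sq, map_sum,
      Finset.sum_congr rfl (fun k _ => inner_self_eq_norm_sq (𝕜 := ℂ) (F k v))] at h2
  -- operator norm bound on partial sums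
  have hop : ∀ s : Finset ℕ, ‖∑ k ∈ s, F k‖ ≤ c := aux_opnorm F horth hc
  have hbnd : ∀ (n : ℕ) (v : H), ‖∑ k ∈ Finset.range n, F k v‖ ≤ c * ‖v‖ := by
    intro n v
    have : ∑ k ∈ Finset.range n, F k v = (∑ k ∈ Finset.range n, F k) v := by
      simp [ContinuousLinearMap.sum_apply]
    rw [this]
    exact ((∑ k ∈ Finset.range n, F k).le_opNorm v).trans
      (mul_le_mul_of_nonneg_right (hop _) (norm_nonneg v))
  -- summability of the squared norms
  have hsummable : ∀ v : H, Summable (fun k => ‖F k v‖ ^ 2) := by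
    intro v
    refine summable_of_sum_range_le (c := (c * ‖v‖) ^ 2) (fun k => by positivity) (fun n => ?_)
    rw [← hexp]
    have := hbnd n v
    nlinarith [norm_nonneg (∑ k ∈ Finset.range n, F k v)]
  -- Cauchy sequence of partial sums
  have hcauchy : ∀ v : H, CauchySeq (fun n => ∑ k ∈ Finset.range n, F k v) := by
    intro v
    have hσ : CauchySeq (fun n => ∑ k ∈ Finset.range n, ‖F k v‖ ^ 2) :=
      ((hsummable v).hasSum.tendsto_sum_nat).cauchySeq
    rw [Metric.cauchySeq_iff] at hσ ⊢
    intro ε hε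
    obtain ⟨N, hN⟩ := hσ (ε ^ 2) (by positivity)
    refine ⟨N, fun n hn m hm => ?_⟩
    have key : ∀ p q : ℕ, q ≤ p →
        dist (∑ k ∈ Finset.range p, F k v) (∑ k ∈ Finset.range q, F k v) ^ 2 =
        (∑ k ∈ Finset.range p, ‖F k v‖ ^ 2) - ∑ k ∈ Finset.range q, ‖F k v‖ ^ 2 := by
      intro p q hqp
      have hsub : ∑ k ∈ Finset.range p, F k v - ∑ k ∈ Finset.range q, F k v =
          ∑ k ∈ Finset.Ico q p, F k v :=
        (Finset.sum_Ico_eq_sub _ hqp).symm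
      rw [dist_eq_norm, hsub, hexp, Finset.sum_Ico_eq_sub _ hqp]
    have main : ∀ p q : ℕ, q ≤ p → N ≤ q → N ≤ p →
        dist (∑ k ∈ Finset.range p, F k v) (∑ k ∈ Finset.range q, F k v) < ε := by
      intro p q hqp hq hp
      have h1 := key p q hqp
      have h2 := hN p hp q hq
      rw [Real.dist_eq] at h2
      have h3 : dist (∑ k ∈ Finset.range p, F k v)
          (∑ k ∈ Finset.range q, F k v) ^ 2 < ε ^ 2 := by
        rw [h1]
        calc _ ≤ |(∑ k ∈ Finset.range p, ‖F k v‖ ^ 2) -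
            ∑ k ∈ Finset.range q, ‖F k v‖ ^ 2| := le_abs_self _
          _ < ε ^ 2 := h2
      exact lt_of_pow_lt_pow_left₀ 2 hε.le h3
    rcases le_total m n with h | h
    · exact main n m h hm hn
    · rw [dist_comm]; exact main m n h hn hm
  -- the pointwise limit
  have hlim : ∀ v : H, ∃ w : H, Filter.Tendsto (fun n => ∑ k ∈ Finset.range n, F k v)
      Filter.atTop (nhds w) := fun v => cauchySeq_tendsto_of_complete (hcauchy v)
  choose f hf using hlim
  -- f is linear
  have hadd : ∀ v w : H, f (v + w) = f v + f w := by
    intro v w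
    refine tendsto_nhds_unique (hf (v + w)) ?_
    have : (fun n => ∑ k ∈ Finset.range n, F k (v + w)) =
        fun n => (∑ k ∈ Finset.range n, F k v) + ∑ k ∈ Finset.range n, F k w := by
      funext n
      rw [← Finset.sum_add_distrib]
      exact Finset.sum_congr rfl (fun k _ => map_add (F k) v w)
    rw [this]
    exact (hf v).add (hf w)
  have hsmul : ∀ (a : ℂ) (v : H), f (a • v) = a • f v := by
    intro a v
    refine tendsto_nhds_unique (hf (a • v)) ?_
    have : (fun n => ∑ k ∈ Finset.range n, F k (a • v)) =
        fun n => a • ∑ k ∈ Finset.range n, F k v := by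
      funext n
      rw [Finset.smul_sum]
      exact Finset.sum_congr rfl (fun k _ => map_smul (F k) a v)
    rw [this]
    exact (hf v).const_smul a
  have hfb : ∀ v : H, ‖f v‖ ≤ c * ‖v‖ := by
    intro v
    exact le_of_tendsto' ((hf v).norm) (fun n => hbnd n v)
  set flin : H →ₗ[ℂ] H :=
    { toFun := f, map_add' := hadd, map_smul' := hsmul } with hflin
  set Fop : H →L[ℂ] H := LinearMap.mkContinuous flin c hfb with hFop
  have hFopv : ∀ v, Fop v = f v := fun v => rfl
  refine ⟨Fop, fun v => by rw [hFopv]; exact hf v, ?_⟩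
  have hle1 : ‖Fop‖ ≤ c := LinearMap.mkContinuous_norm_le flin hc0 hfb
  have hle2 : c ≤ ‖Fop‖ := by
    refine ciSup_le (fun k => ?_)
    -- adjoint (F k) ∘L Fop = adjoint (F k) ∘L F k
    have hcomp : ContinuousLinearMap.adjoint (F k) ∘L Fop =
        ContinuousLinearMap.adjoint (F k) ∘L F k := by
      ext v
      have t1 : Filter.Tendsto
          (fun n => ContinuousLinearMap.adjoint (F k) (∑ j ∈ Finset.range n, F j v))
          Filter.atTop (nhds (ContinuousLinearMap.adjoint (F k) (Fop v))) :=
        ((ContinuousLinearMap.adjoint (F k)).continuous.tendsto _).comp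
          (by rw [hFopv]; exact hf v)
      have t2 : ∀ n, k < n →
          ContinuousLinearMap.adjoint (F k) (∑ j ∈ Finset.range n, F j v) =
          ContinuousLinearMap.adjoint (F k) (F k v) := by
        intro n hkn
        rw [map_sum]
        refine Finset.sum_eq_single k (fun j hj hjk => ?_)
          (fun hk' => absurd (Finset.mem_range.2 hkn) hk')
        have h0 := (horth k j (Ne.symm hjk)).2
        have : ContinuousLinearMap.adjoint (F k) (F j v) =
            (ContinuousLinearMap.adjoint (F k) ∘L F j) v := rfl
        rw [this, h0]; rfl
      have t3 : Filter.Tendsto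
          (fun n => ContinuousLinearMap.adjoint (F k) (∑ j ∈ Finset.range n, F j v))
          Filter.atTop (nhds (ContinuousLinearMap.adjoint (F k) (F k v))) := by
        refine Filter.Tendsto.congr' ?_ tendsto_const_nhds
        filter_upwards [Filter.eventually_gt_atTop k] with n hn
        exact (t2 n hn).symm
      exact tendsto_nhds_unique t1 t3
    have hnorm1 : ‖F k‖ * ‖F k‖ =
        ‖ContinuousLinearMap.adjoint (F k) ∘L F k‖ :=
      (ContinuousLinearMap.norm_adjoint_comp_self (F k)).symm
    have hnorm2 : ‖ContinuousLinearMap.adjoint (F k) ∘L Fop‖ ≤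
        ‖ContinuousLinearMap.adjoint (F k)‖ * ‖Fop‖ :=
      ContinuousLinearMap.opNorm_comp_le _ _
    have hadjn : ‖ContinuousLinearMap.adjoint (F k)‖ = ‖F k‖ :=
      (ContinuousLinearMap.adjoint : (H →L[ℂ] H) ≃ₗᵢ⋆[ℂ] (H →L[ℂ] H)).norm_map (F k)
    rw [hcomp, hadjn] at hnorm2
    rcases eq_or_lt_of_le (norm_nonneg (F k)) with h0 | h0
    · rw [← h0]; exact norm_nonneg Fop
    · have : ‖F k‖ * ‖F k‖ ≤ ‖F k‖ * ‖Fop‖ := hnorm1.le.trans hnorm2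
      exact le_of_mul_le_mul_left this h0
  exact le_antisymm hle1 hle2
end

section
/- Let H be a complex Hilbert space, A a bounded linear operator on H, Γ a countable group equipped with a proper length function l, and for each γ ∈ Γ let U_γ be a unitary operator on H. Assume that for every s ∈ H, ‖A (U_γ s)‖ → 0 as l(γ) → ∞. Suppose furthermore that Γ is partitioned into finite subsets ("orbits") each of cardinality at most a fixed N ∈ ℕ, on each of which l is constant; write l(O) for the common value of l on the part O. Then for every compact operator T on H, the sums Σ_{γ ∈ O} ‖A ∘ U_γ ∘ T ∘ U_γ⁻¹‖ (operator norms) tend to 0 as l(O) → ∞ over the parts O of the partition. -/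
open Metric Set

/-- Key lemma: the individual operator norms go to zero. -/
lemma key_lemma {H : Type*} [NormedAddCommGroup H] [InnerProductSpace ℂ H]
    [CompleteSpace H]
    {Γ : Type*} [Group Γ]
    (l : Γ → ℝ)
    (A : H →L[ℂ] H)
    (U : Γ → H →L[ℂ] H) (hU : ∀ γ, U γ ∈ unitary (H →L[ℂ] H))
    (hA : ∀ s : H, ∀ ε > 0, ∃ n : ℝ, ∀ γ, l γ > n → ‖A (U γ s)‖ < ε)
    (T : H →L[ℂ] H) (hT : IsCompactOperator (⇑T)) :
    ∀ ε > 0, ∃ n : ℝ, ∀ γ, l γ > n → ‖A ∘L U γ ∘L T ∘L star (U γ)‖ ≤ ε := by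
  intro ε hε
  -- the compact set
  have hK : IsCompact (closure (⇑T '' closedBall (0:H) 1)) :=
    IsCompactOperator.isCompact_closure_image_closedBall (f := (T : H →ₗ[ℂ] H)) hT 1
  set K := closure (⇑T '' closedBall (0:H) 1) with hKdef
  set δ : ℝ := ε / (2 * (‖A‖ + 1)) with hδdef
  have hApos : (0:ℝ) < ‖A‖ + 1 := by positivity
  have hδpos : 0 < δ := by positivity
  obtain ⟨t, htf, hcov⟩ := (Metric.totallyBounded_iff.mp hK.totallyBounded) δ hδpos
  -- choose thresholds for each center
  have hch : ∀ y : H, ∃ n : ℝ, ∀ γ, l γ > n → ‖A (U γ y)‖ < ε / 2 :=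
    fun y => hA y (ε / 2) (by positivity)
  choose nf hnf using hch
  -- the max threshold
  classical
  obtain ⟨n, hnge'⟩ := (htf.image nf).bddAbove
  have hnge : ∀ y ∈ t, nf y ≤ n := fun y hy => hnge' ⟨y, hy, rfl⟩
  refine ⟨n, fun γ hγ => ?_⟩
  have hUiso : ∀ x : H, ‖U γ x‖ = ‖x‖ :=
    fun x => ContinuousLinearMap.norm_map_of_mem_unitary (hU γ) x
  have hUstar : star (U γ) ∈ unitary (H →L[ℂ] H) := Unitary.star_mem (hU γ)
  have hUsiso : ∀ x : H, ‖star (U γ) x‖ = ‖x‖ :=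
    fun x => ContinuousLinearMap.norm_map_of_mem_unitary hUstar x
  -- bound on the unit ball
  have hball : ∀ x : H, ‖x‖ ≤ 1 → ‖(A ∘L U γ ∘L T ∘L star (U γ)) x‖ ≤ ε := by
    intro x hx
    set z := star (U γ) x with hz
    have hzK : T z ∈ K := subset_closure ⟨z, by simpa [mem_closedBall, dist_eq_norm, hz, hUsiso], rfl⟩
    have := hcov hzK
    simp only [Set.mem_iUnion, Metric.mem_ball] at this
    obtain ⟨y, hy, hdy⟩ := this
    have hAy : ‖A (U γ y)‖ < ε / 2 := hnf y γ (lt_of_le_of_lt (hnge y hy) hγ)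
    have hsplit : (A ∘L U γ ∘L T ∘L star (U γ)) x = A (U γ (T z - y)) + A (U γ y) := by
      simp [hz, map_sub]
    rw [hsplit]
    have h1 : ‖A (U γ (T z - y))‖ ≤ ‖A‖ * δ := by
      calc ‖A (U γ (T z - y))‖ ≤ ‖A‖ * ‖U γ (T z - y)‖ := A.le_opNorm _
        _ = ‖A‖ * ‖T z - y‖ := by rw [hUiso]
        _ ≤ ‖A‖ * δ := by
            apply mul_le_mul_of_nonneg_left _ (norm_nonneg A)
            rw [dist_eq_norm] at hdy; exact hdy.le
    have h2 : ‖A‖ * δ ≤ ε / 2 := by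
      have ha : ‖A‖ * δ ≤ (‖A‖ + 1) * δ := by nlinarith [hδpos.le]
      have hb : (‖A‖ + 1) * δ = ε / 2 := by rw [hδdef]; field_simp
      linarith
    calc ‖A (U γ (T z - y)) + A (U γ y)‖ ≤ ‖A (U γ (T z - y))‖ + ‖A (U γ y)‖ := norm_add_le _ _
      _ ≤ ε / 2 + ε / 2 := add_le_add (h1.trans h2) hAy.le
      _ = ε := by ring
  -- conclude on op norm
  apply ContinuousLinearMap.opNorm_le_bound _ hε.le
  intro x
  rcases eq_or_ne x 0 with rfl | hx0
  · simp
  · have hxn : (0:ℝ) < ‖x‖ := norm_pos_iff.mpr hx0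
    have h1 : ‖((‖x‖:ℂ)⁻¹ • x)‖ ≤ 1 := by
      rw [norm_smul]
      simp [hxn.ne', inv_mul_cancel₀ hxn.ne']
    have := hball _ h1
    rw [map_smul, norm_smul] at this
    have h2 : ‖((‖x‖:ℂ)⁻¹)‖ = ‖x‖⁻¹ := by
      simp [hxn.le]
    rw [h2] at this
    calc ‖(A ∘L U γ ∘L T ∘L star (U γ)) x‖
        = ‖x‖ * (‖x‖⁻¹ * ‖(A ∘L U γ ∘L T ∘L star (U γ)) x‖) := by
          field_simp
      _ ≤ ‖x‖ * ε := mul_le_mul_of_nonneg_left this hxn.le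
      _ = ε * ‖x‖ := mul_comm _ _



/-- Let `H` be a complex Hilbert space, `A` a bounded operator on `H`,
`Γ` a countable group with a proper length function `l`, and `U γ` a unitary operator
on `H` for each `γ`, with `‖A (U γ s)‖ → 0` as `l γ → ∞` for every `s ∈ H`.  Suppose
`Γ` is partitioned into finite subsets ("orbits") `parts i` of cardinality at most a
fixed `N`, on each of which `l` is constant.  Then for every compact operator `T` on
`H`, the sums `∑_{γ ∈ parts i} ‖A ∘ U γ ∘ T ∘ (U γ)⁻¹‖` tend to `0` as the common
length of the part tends to `∞`. -/
theorem statement1 {H : Type*} [NormedAddCommGroup H] [InnerProductSpace ℂ H]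
    [CompleteSpace H]
    {Γ : Type*} [Group Γ] [Countable Γ]
    (l : Γ → ℝ) (hl_nonneg : ∀ γ, 0 ≤ l γ)
    (hl_zero : ∀ γ, l γ = 0 ↔ γ = 1)
    (hl_sub : ∀ γ₁ γ₂, l (γ₁ * γ₂) ≤ l γ₁ + l γ₂)
    (hl_inv : ∀ γ, l γ⁻¹ = l γ)
    (hl_proper : ∀ C : ℝ, {γ : Γ | l γ ≤ C}.Finite)
    (A : H →L[ℂ] H)
    (U : Γ → H →L[ℂ] H) (hU : ∀ γ, U γ ∈ unitary (H →L[ℂ] H))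
    (hA : ∀ s : H, ∀ ε > 0, ∃ n : ℝ, ∀ γ, l γ > n → ‖A (U γ s)‖ < ε)
    {ι : Type*} (parts : ι → Finset Γ)
    (hpartition : ∀ γ : Γ, ∃! i : ι, γ ∈ parts i)
    (N : ℕ) (hcard : ∀ i, (parts i).card ≤ N)
    (hlconst : ∀ i, ∀ γ₁ ∈ parts i, ∀ γ₂ ∈ parts i, l γ₁ = l γ₂)
    (T : H →L[ℂ] H) (hT : IsCompactOperator (⇑T)) :
    ∀ ε > 0, ∃ n : ℝ, ∀ i : ι, ∀ γ₀ ∈ parts i, l γ₀ > n →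
      ∑ γ ∈ parts i, ‖A ∘L U γ ∘L T ∘L star (U γ)‖ < ε := by
  intro ε hε
  have hε' : (0:ℝ) < ε / (2 * (N + 1)) := by positivity
  obtain ⟨n, hn⟩ := key_lemma l A U hU hA T hT (ε / (2 * (N + 1))) hε'
  refine ⟨n, fun i γ₀ hγ₀ hlγ₀ => ?_⟩
  have hsum : ∑ γ ∈ parts i, ‖A ∘L U γ ∘L T ∘L star (U γ)‖
      ≤ (parts i).card • (ε / (2 * (N + 1))) := by
    apply Finset.sum_le_card_nsmul
    intro γ hγ
    exact hn γ (by rw [hlconst i γ hγ γ₀ hγ₀]; exact hlγ₀)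
  have h2 : ((parts i).card : ℝ) * (ε / (2 * (N + 1))) ≤ (N : ℝ) * (ε / (2 * (N + 1))) := by
    apply mul_le_mul_of_nonneg_right _ hε'.le
    exact_mod_cast hcard i
  have h3 : (N : ℝ) * (ε / (2 * (N + 1))) < ε := by
    rw [mul_div_assoc']
    rw [div_lt_iff₀ (by positivity)]
    nlinarith [Nat.cast_nonneg (α := ℝ) N]
  calc ∑ γ ∈ parts i, ‖A ∘L U γ ∘L T ∘L star (U γ)‖
      ≤ ((parts i).card : ℝ) * (ε / (2 * (N + 1))) := by
        simpa [nsmul_eq_mul] using hsum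
    _ ≤ (N : ℝ) * (ε / (2 * (N + 1))) := h2
    _ < ε := h3
end

section
/- Let H be a complex Hilbert space and d ≥ 1. Let U : ℝ^d → U(H) be a group homomorphism into the unitary group of H which is strongly continuous (t ↦ U(t)s is continuous for every s ∈ H) and ℤ^d-periodic (U(t + λ) = U(t) for all λ ∈ ℤ^d), so that U defines a unitary representation of the torus ℝ^d/ℤ^d. Let κ : ℤ^d → ℤ^d be an injective group homomorphism, and let (V_λ)_{λ ∈ ℤ^d} be a family of unitary operators on H satisfying the commutation relation V_λ ∘ U(t) ∘ V_λ⁻¹ = e^{−2πi⟨κ(λ), t⟩} · U(t) for all λ ∈ ℤ^d and t ∈ ℝ^d. Then for every continuous ℤ^d-periodic function a : ℝ^d → ℂ and every s ∈ H, the norm ‖∫_{[0,1]^d} a(t) · U(t)(V_λ s) dt‖ tends to 0 as ‖λ‖ → ∞ (i.e. along the cofinite filter on ℤ^d). -/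
open MeasureTheory
open Set Pointwise

lemma aux_translate {X : Type*} [NormedAddCommGroup X] [NormedSpace ℝ X]
    {d : ℕ} (φ : (Fin d → ℝ) → X)
    (hper : ∀ (t : Fin d → ℝ) (μ : Fin d → ℤ), φ (t + fun i => (μ i : ℝ)) = φ t)
    (h : Fin d → ℝ) :
    ∫ t in Set.Icc (0 : Fin d → ℝ) 1, φ (t + h) = ∫ t in Set.Icc (0 : Fin d → ℝ) 1, φ t := by
  classical
  set b := Pi.basisFun ℝ (Fin d) with hb
  set L := (Submodule.span ℤ (Set.range ⇑b)).toAddSubgroup with hL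
  have hfd : IsAddFundamentalDomain L (ZSpan.fundamentalDomain b) volume :=
    ZSpan.isAddFundamentalDomain' b volume
  -- invariance of φ under L
  have hinv : ∀ (g : L) (x : Fin d → ℝ), φ (g +ᵥ x) = φ x := by
    intro g x
    have hg : (g : Fin d → ℝ) ∈ Submodule.span ℤ (Set.range ⇑b) := g.2
    have hrep := (b.mem_span_iff_repr_mem ℤ _).mp hg
    choose μ hμ using hrep
    have hgx : (g : Fin d → ℝ) = fun i => (μ i : ℝ) := by
      funext i
      have := hμ i
      simpa [hb, Pi.basisFun_repr] using (hμ i).symm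
    have : (g +ᵥ x : Fin d → ℝ) = x + fun i => (μ i : ℝ) := by
      rw [← hgx]
      show (g : Fin d → ℝ) + x = x + (g : Fin d → ℝ)
      abel
    rw [this, hper]
  haveI : VAddCommClass (Fin d → ℝ) L (Fin d → ℝ) := by
    constructor
    intro a g c
    show a + ((g : Fin d → ℝ) + c) = (g : Fin d → ℝ) + (a + c)
    abel
  haveI : Countable L := inferInstanceAs (Countable (Submodule.span ℤ (Set.range ⇑b)))
  have hfd2 : IsAddFundamentalDomain L (h +ᵥ ZSpan.fundamentalDomain b) volume :=
    hfd.vadd_of_comm h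
  have h1 : ∫ t in ZSpan.fundamentalDomain b, φ t
      = ∫ t in (h +ᵥ ZSpan.fundamentalDomain b), φ t :=
    hfd.setIntegral_eq hfd2 hinv
  have h2 : ∫ t in (h +ᵥ ZSpan.fundamentalDomain b), φ t
      = ∫ t in ZSpan.fundamentalDomain b, φ (h + t) := by
    rw [show h +ᵥ ZSpan.fundamentalDomain b = (h +ᵥ ·) '' ZSpan.fundamentalDomain b by
      rw [Set.image_vadd]]
    exact (measurePreserving_vadd h volume).setIntegral_image_emb
      (measurableEmbedding_const_vadd h) _ _
  have hFD : ZSpan.fundamentalDomain b = Set.pi Set.univ fun _ : Fin d => Set.Ico (0:ℝ) 1 := by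
    ext x
    simp [ZSpan.fundamentalDomain, hb, Pi.basisFun_repr]
  have hae : ZSpan.fundamentalDomain b =ᵐ[volume] Set.Icc (0 : Fin d → ℝ) 1 := by
    rw [hFD, show (volume : Measure (Fin d → ℝ)) = Measure.pi fun _ => volume from volume_pi]
    exact Measure.univ_pi_Ico_ae_eq_Icc
  calc ∫ t in Set.Icc (0 : Fin d → ℝ) 1, φ (t + h)
      = ∫ t in ZSpan.fundamentalDomain b, φ (t + h) := (setIntegral_congr_set hae).symm
    _ = ∫ t in ZSpan.fundamentalDomain b, φ (h + t) := by
        apply setIntegral_congr_fun (ZSpan.fundamentalDomain_measurableSet b)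
        intro t _; dsimp only; rw [add_comm]
    _ = ∫ t in (h +ᵥ ZSpan.fundamentalDomain b), φ t := h2.symm
    _ = ∫ t in ZSpan.fundamentalDomain b, φ t := h1.symm
    _ = ∫ t in Set.Icc (0 : Fin d → ℝ) 1, φ t := setIntegral_congr_set hae

noncomputable def efun {d : ℕ} (m : Fin d → ℤ) (t : Fin d → ℝ) : ℂ :=
  Complex.exp (((2 * Real.pi * ∑ j, (m j : ℝ) * t j : ℝ)) * Complex.I)

lemma efun_norm {d : ℕ} (m : Fin d → ℤ) (t : Fin d → ℝ) : ‖efun m t‖ = 1 := by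
  unfold efun
  exact Complex.norm_exp_ofReal_mul_I _

lemma efun_continuous {d : ℕ} (m : Fin d → ℤ) : Continuous (efun m) := by
  have h1 : Continuous fun t : Fin d → ℝ => (2 * Real.pi * ∑ j, (m j : ℝ) * t j : ℝ) := by
    apply continuous_const.mul
    exact continuous_finset_sum _ fun j _ => continuous_const.mul (continuous_apply j)
  exact Complex.continuous_exp.comp ((Complex.continuous_ofReal.comp h1).mul continuous_const)

lemma efun_per {d : ℕ} (m : Fin d → ℤ) (t : Fin d → ℝ) (μ : Fin d → ℤ) :
    efun m (t + fun i => (μ i : ℝ)) = efun m t := by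
  have hsum : (∑ j, (m j : ℝ) * (t j + (μ j : ℝ)))
      = (∑ j, (m j : ℝ) * t j) + ((∑ j, m j * μ j : ℤ) : ℝ) := by
    push_cast
    rw [← Finset.sum_add_distrib]
    congr 1; funext j; ring
  unfold efun
  rw [show (t + fun i => (μ i : ℝ)) = fun j => t j + (μ j : ℝ) from rfl]
  simp only [hsum]
  rw [show ((2 * Real.pi * ((∑ j, (m j : ℝ) * t j) + ((∑ j, m j * μ j : ℤ) : ℝ)) : ℝ) : ℂ) * Complex.I
      = ((2 * Real.pi * ∑ j, (m j : ℝ) * t j : ℝ) : ℂ) * Complex.I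
        + ((∑ j, m j * μ j : ℤ) : ℂ) * (2 * Real.pi * Complex.I) by push_cast; ring]
  rw [Complex.exp_add, Complex.exp_int_mul_two_pi_mul_I, mul_one]

lemma efun_shift {d : ℕ} (m : Fin d → ℤ) (t : Fin d → ℝ) (j : Fin d) (hmj : m j ≠ 0) :
    efun m (t + (Pi.single j (1 / (2 * (m j : ℝ))) : Fin d → ℝ)) = - efun m t := by
  classical
  set p : Fin d → ℝ := Pi.single j (1 / (2 * (m j : ℝ))) with hp
  have hmjR : ((m j : ℝ)) ≠ 0 := Int.cast_ne_zero.mpr hmj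
  have hsum : (∑ i, (m i : ℝ) * (t i + p i))
      = (∑ i, (m i : ℝ) * t i) + 1/2 := by
    rw [show (∑ i, (m i : ℝ) * (t i + p i))
        = (∑ i, (m i : ℝ) * t i) + ∑ i, (m i : ℝ) * p i by
      rw [← Finset.sum_add_distrib]; congr 1; funext i; ring]
    congr 1
    rw [Finset.sum_eq_single j]
    · rw [hp, Pi.single_eq_same]; field_simp
    · intro i _ hij; rw [hp, Pi.single_eq_of_ne hij, mul_zero]
    · intro hj; exact absurd (Finset.mem_univ j) hj
  unfold efun
  rw [show (t + p) = fun i => t i + p i from rfl]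
  simp only [hsum]
  rw [show ((2 * Real.pi * ((∑ i, (m i : ℝ) * t i) + 1/2) : ℝ) : ℂ) * Complex.I
      = ((2 * Real.pi * ∑ i, (m i : ℝ) * t i : ℝ) : ℂ) * Complex.I + Real.pi * Complex.I by
    push_cast; ring]
  rw [Complex.exp_add, Complex.exp_pi_mul_I, mul_neg_one]

lemma auxRL {H : Type*} [NormedAddCommGroup H] [NormedSpace ℂ H] [CompleteSpace H] {d : ℕ}
    (g : (Fin d → ℝ) → H) (hg : Continuous g)
    (hgper : ∀ (t : Fin d → ℝ) (μ : Fin d → ℤ), g (t + fun i => (μ i : ℝ)) = g t) :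
    Filter.Tendsto (fun m : Fin d → ℤ => ‖∫ t in Set.Icc (0 : Fin d → ℝ) 1, efun m t • g t‖)
      Filter.cofinite (nhds 0) := by
  classical
  rw [Metric.tendsto_nhds]
  intro ε hε
  -- uniform continuity on a compact neighborhood of the cube
  set K : Set (Fin d → ℝ) := Set.Icc (-1) 2 with hK
  have hKc : IsCompact K := isCompact_Icc
  have hUC := hKc.uniformContinuousOn_of_continuous hg.continuousOn
  rw [Metric.uniformContinuousOn_iff] at hUC
  obtain ⟨δ, hδpos, hδ⟩ := hUC (ε/2) (by positivity)
  obtain ⟨N, hN⟩ := exists_nat_gt (1/δ)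
  rw [Filter.eventually_cofinite]
  have hSfin : {m : Fin d → ℤ | ∀ j, |m j| ≤ (N : ℤ)}.Finite := by
    have hsub : {m : Fin d → ℤ | ∀ j, |m j| ≤ (N : ℤ)}
        ⊆ Set.pi Set.univ (fun _ : Fin d => Set.Icc (-(N : ℤ)) N) := by
      intro m hm j _
      rw [Set.mem_Icc, ← abs_le]
      exact hm j
    exact (Set.Finite.pi fun _ => Set.finite_Icc _ _).subset hsub
  apply hSfin.subset
  intro m hm
  simp only [Set.mem_setOf_eq, not_lt] at hm
  by_contra hmS
  simp only [Set.mem_setOf_eq, not_forall, not_le] at hmS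
  obtain ⟨j, hj⟩ := hmS
  apply absurd hm
  rw [not_le]
  -- the shift
  have hmj0 : m j ≠ 0 := by
    intro h0
    rw [h0] at hj
    simp at hj
    omega
  set c : ℝ := 1 / (2 * (m j : ℝ)) with hc
  have hmjR : (N : ℝ) + 1 ≤ |(m j : ℝ)| := by
    rw [← Int.cast_abs]
    exact_mod_cast Int.add_one_le_iff.mpr hj
  have hNpos : (0:ℝ) < (N : ℝ) + 1 := by positivity
  have habs : |c| = 1 / (2 * |(m j : ℝ)|) := by
    rw [hc, abs_div, abs_one, abs_mul]
    norm_num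
  have hcδ : |c| < δ := by
    rw [habs]
    have h1 : 1/δ < (N : ℝ) + 1 := hN.trans (lt_add_one _)
    have h2 : 1 < ((N:ℝ)+1) * δ := by
      rw [div_lt_iff₀ hδpos] at h1
      linarith
    rw [div_lt_iff₀ (by positivity : (0:ℝ) < 2 * |(m j : ℝ)|)]
    calc (1:ℝ) < ((N:ℝ)+1) * δ := h2
      _ ≤ |(m j : ℝ)| * δ := by nlinarith
      _ ≤ δ * (2 * |(m j : ℝ)|) := by nlinarith [abs_nonneg ((m j : ℝ))]
  have hc2 : |c| ≤ 1/2 := by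
    rw [habs]
    have : (1:ℝ) ≤ |(m j : ℝ)| := by
      have h9 : (0:ℝ) ≤ (N:ℝ) := Nat.cast_nonneg N
      linarith
    rw [div_le_div_iff₀ (by positivity) (by norm_num)]
    linarith
  set p : Fin d → ℝ := Pi.single j c with hp
  have hpnorm : ‖p‖ = |c| := by rw [hp, Pi.norm_single, Real.norm_eq_abs]
  have hpabs : ∀ i, |p i| ≤ 1/2 := by
    intro i
    by_cases hij : i = j
    · subst hij; rw [hp, Pi.single_eq_same]; exact hc2
    · rw [hp, Pi.single_eq_of_ne hij]; norm_num
  -- continuity and integrability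
  have hψ₁c : Continuous fun t => efun m t • g t := (efun_continuous m).smul hg
  have hψ₂c : Continuous fun t => efun m t • g (t + p) :=
    (efun_continuous m).smul (hg.comp (continuous_id.add continuous_const))
  have hint1 : IntegrableOn (fun t => efun m t • g t) (Set.Icc 0 1) volume :=
    hψ₁c.integrableOn_Icc
  have hint2 : IntegrableOn (fun t => efun m t • g (t + p)) (Set.Icc 0 1) volume :=
    hψ₂c.integrableOn_Icc
  set I₁ : H := ∫ t in Set.Icc (0 : Fin d → ℝ) 1, efun m t • g t with hI₁
  set I₂ : H := ∫ t in Set.Icc (0 : Fin d → ℝ) 1, efun m t • g (t + p) with hI₂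
  -- translation invariance
  have hper' : ∀ (t : Fin d → ℝ) (μ : Fin d → ℤ),
      (fun t => efun m t • g t) (t + fun i => (μ i : ℝ)) = (fun t => efun m t • g t) t := by
    intro t μ
    simp only [efun_per, hgper]
  have htrans : ∫ t in Set.Icc (0 : Fin d → ℝ) 1, efun m (t + p) • g (t + p) = I₁ :=
    aux_translate (fun t => efun m t • g t) hper' p
  have hI₁neg : I₁ = -I₂ := by
    rw [← htrans]
    rw [show (fun t : Fin d → ℝ => efun m (t + p) • g (t + p))
        = fun t => -(efun m t • g (t + p)) by
      funext t
      rw [efun_shift m t j hmj0, neg_smul]]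
    rw [integral_neg]
  have hdiff : (2:ℝ) • I₁ = ∫ t in Set.Icc (0 : Fin d → ℝ) 1, efun m t • (g t - g (t + p)) := by
    have : (2:ℝ) • I₁ = I₁ - I₂ := by
      rw [hI₁neg]; module
    rw [this, hI₁, hI₂, ← integral_sub hint1 hint2]
    congr 1
    funext t
    rw [smul_sub]
  -- the bound
  have hbound : ‖∫ t in Set.Icc (0 : Fin d → ℝ) 1, efun m t • (g t - g (t + p))‖
      ≤ (ε/2) * (volume (Set.Icc (0 : Fin d → ℝ) 1)).toReal := by
    apply norm_setIntegral_le_of_norm_le_const (isCompact_Icc.measure_lt_top)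
    · intro t ht
      rw [norm_smul, efun_norm, one_mul]
      have htK : t ∈ K := by
        rw [hK, Set.mem_Icc]
        rw [Set.mem_Icc] at ht
        constructor <;> intro i
        · show (-1 : ℝ) ≤ t i
          have h1 : (0:ℝ) ≤ t i := ht.1 i
          linarith
        · show t i ≤ (2 : ℝ)
          have h1 : t i ≤ (1:ℝ) := ht.2 i
          linarith
      have htpK : t + p ∈ K := by
        rw [hK, Set.mem_Icc]
        rw [Set.mem_Icc] at ht
        constructor <;> intro i
        · show (-1 : ℝ) ≤ t i + p i
          have h1 : (0:ℝ) ≤ t i := ht.1 i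
          have h2 := abs_le.mp (hpabs i)
          linarith [h2.1]
        · show t i + p i ≤ (2 : ℝ)
          have h1 : t i ≤ (1:ℝ) := ht.2 i
          have h2 := abs_le.mp (hpabs i)
          linarith [h2.2]
      have hdist : dist t (t + p) < δ := by
        rw [dist_self_add_right, hpnorm]
        exact hcδ
      have := hδ t htK (t + p) htpK hdist
      rw [dist_eq_norm] at this
      exact this.le
  have hvol : (volume (Set.Icc (0 : Fin d → ℝ) 1)).toReal = 1 := by
    rw [Real.volume_Icc_pi_toReal zero_le_one]
    simp
  rw [hvol, mul_one] at hbound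
  have h2norm : ‖(2:ℝ) • I₁‖ = 2 * ‖I₁‖ := by
    rw [norm_smul, Real.norm_ofNat]
  rw [hdiff] at h2norm
  rw [Real.dist_eq, sub_zero, abs_of_nonneg (norm_nonneg _)]
  have : 2 * ‖I₁‖ ≤ ε/2 := by rw [← h2norm]; exact hbound
  linarith


/-- Let `H` be a complex Hilbert space and `d ≥ 1`.  Let
`U : ℝ^d → U(H)` be a strongly continuous, `ℤ^d`-periodic unitary representation
(so a representation of the torus `ℝ^d/ℤ^d`), `κ : ℤ^d → ℤ^d` an injective group
homomorphism, and `(V λ)` a family of unitaries satisfying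
`V λ ∘ U t ∘ (V λ)⁻¹ = e^{-2πi⟨κ λ, t⟩} • U t`.  Then for every continuous
`ℤ^d`-periodic `a : ℝ^d → ℂ` and every `s ∈ H`, the norm
`‖∫_{[0,1]^d} a t • U t (V λ s) dt‖` tends to `0` along the cofinite filter on `ℤ^d`. -/
theorem statement3 {H : Type*} [NormedAddCommGroup H] [InnerProductSpace ℂ H]
    [CompleteSpace H]
    (d : ℕ) (hd : 1 ≤ d)
    (U : (Fin d → ℝ) → H →L[ℂ] H)
    (hU_unitary : ∀ t, U t ∈ unitary (H →L[ℂ] H))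
    (hU_one : U 0 = 1)
    (hU_hom : ∀ t₁ t₂, U (t₁ + t₂) = U t₁ ∘L U t₂)
    (hU_cont : ∀ s : H, Continuous fun t => U t s)
    (hU_per : ∀ (t : Fin d → ℝ) (μ : Fin d → ℤ), U (t + fun i => (μ i : ℝ)) = U t)
    (κ : (Fin d → ℤ) →+ (Fin d → ℤ)) (hκ : Function.Injective κ)
    (V : (Fin d → ℤ) → H →L[ℂ] H)
    (hV_unitary : ∀ lam, V lam ∈ unitary (H →L[ℂ] H))
    (hcomm : ∀ (lam : Fin d → ℤ) (t : Fin d → ℝ),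
      V lam ∘L U t ∘L star (V lam) =
        Complex.exp (-(2 * (Real.pi : ℂ) * Complex.I) *
          ∑ j, (κ lam j : ℂ) * ((t j : ℝ) : ℂ)) • U t) :
    ∀ a : (Fin d → ℝ) → ℂ, Continuous a →
      (∀ (t : Fin d → ℝ) (μ : Fin d → ℤ), a (t + fun i => (μ i : ℝ)) = a t) →
      ∀ s : H,
        Filter.Tendsto
          (fun lam : Fin d → ℤ =>
            ‖∫ t in Set.Icc (0 : Fin d → ℝ) 1, a t • (U t) ((V lam) s)‖)
          Filter.cofinite (nhds 0) := by
  intro a ha haper s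
  set g : (Fin d → ℝ) → H := fun t => a t • (U t) s with hg_def
  have hg : Continuous g := ha.smul (hU_cont s)
  have hgper : ∀ (t : Fin d → ℝ) (μ : Fin d → ℤ), g (t + fun i => (μ i : ℝ)) = g t := by
    intro t μ
    rw [hg_def]
    dsimp only
    rw [haper t μ, hU_per t μ]
  have hkey : ∀ (lam : Fin d → ℤ) (t : Fin d → ℝ),
      (U t) ((V lam) s) = efun (κ lam) t • (V lam) ((U t) s) := by
    intro lam t
    have hc := hcomm lam t
    have happ := congrArg (fun T : H →L[ℂ] H => T ((V lam) s)) hc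
    simp only [ContinuousLinearMap.comp_apply, ContinuousLinearMap.smul_apply] at happ
    have hstar : (star (V lam)) ((V lam) s) = s := by
      have h1 : star (V lam) * V lam = 1 := (Unitary.mem_iff.mp (hV_unitary lam)).1
      calc (star (V lam)) ((V lam) s) = (star (V lam) * V lam) s := rfl
        _ = s := by rw [h1]; rfl
    rw [hstar] at happ
    have hee : efun (κ lam) t * Complex.exp (-(2 * (Real.pi : ℂ) * Complex.I) *
        ∑ j, (κ lam j : ℂ) * ((t j : ℝ) : ℂ)) = 1 := by
      rw [efun, ← Complex.exp_add]
      rw [show ((2 * Real.pi * ∑ j, ((κ lam) j : ℝ) * t j : ℝ) : ℂ) * Complex.I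
          + -(2 * (Real.pi : ℂ) * Complex.I) * ∑ j, ((κ lam) j : ℂ) * ((t j : ℝ) : ℂ) = 0 by
        push_cast; ring]
      exact Complex.exp_zero
    calc (U t) ((V lam) s)
        = (efun (κ lam) t * Complex.exp (-(2 * (Real.pi : ℂ) * Complex.I) *
            ∑ j, (κ lam j : ℂ) * ((t j : ℝ) : ℂ))) • (U t) ((V lam) s) := by
          rw [hee, one_smul]
      _ = efun (κ lam) t • (Complex.exp (-(2 * (Real.pi : ℂ) * Complex.I) *
            ∑ j, (κ lam j : ℂ) * ((t j : ℝ) : ℂ)) • (U t) ((V lam) s)) := by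
          rw [mul_smul]
      _ = efun (κ lam) t • (V lam) ((U t) s) := by rw [← happ]
  have hstep : ∀ lam : Fin d → ℤ,
      ∫ t in Set.Icc (0 : Fin d → ℝ) 1, a t • (U t) ((V lam) s)
        = (V lam) (∫ t in Set.Icc (0 : Fin d → ℝ) 1, efun (κ lam) t • g t) := by
    intro lam
    have hinteg : Integrable (fun t => efun (κ lam) t • g t)
        (volume.restrict (Set.Icc (0 : Fin d → ℝ) 1)) :=
      ((efun_continuous _).smul hg).integrableOn_Icc
    rw [← ContinuousLinearMap.integral_comp_comm (V lam) hinteg]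
    apply setIntegral_congr_fun measurableSet_Icc
    intro t _
    dsimp only
    rw [hg_def]
    dsimp only
    rw [hkey lam t, _root_.map_smul, _root_.map_smul, smul_smul, smul_smul, mul_comm]
  have hRL := (auxRL g hg hgper).comp hκ.tendsto_cofinite
  have hfun : (fun lam : Fin d → ℤ =>
      ‖∫ t in Set.Icc (0 : Fin d → ℝ) 1, a t • (U t) ((V lam) s)‖)
      = (fun m : Fin d → ℤ => ‖∫ t in Set.Icc (0 : Fin d → ℝ) 1, efun m t • g t‖) ∘ ⇑κ := by
    funext lam
    simp only [Function.comp_apply]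
    rw [hstep lam, ContinuousLinearMap.norm_map_of_mem_unitary (hV_unitary lam)]
  rw [hfun]
  exact hRL
end

section
/- Let Γ be a countable group equipped with a proper length function l, and for γ ∈ Γ let L_γ denote the left-translation unitary on ℓ²(Γ), (L_γ s)(y) = s(γ⁻¹ y). Let d ≥ 1 and let wt : Γ → ℤ^d be any function; for f : ℤ^d → ℂ, let M_f denote the operator on ℓ²(Γ) of multiplication by the function f ∘ wt. Then the following are equivalent: (i) for every f : ℤ^d → ℂ vanishing at infinity (f tends to 0 along the cofinite filter on ℤ^d) and every s ∈ ℓ²(Γ), ‖M_f (L_γ s)‖ → 0 as l(γ) → ∞; (ii) wt has finite fibres, i.e. wt⁻¹(m) is a finite set for every m ∈ ℤ^d. -/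
/-- Let `Γ` be a countable group with a proper length function `l`,
and let `L γ` be the left-translation unitary on `ℓ²(Γ)`, `(L γ s) y = s (γ⁻¹ y)`.
Let `wt : Γ → ℤ^d` and for `f : ℤ^d → ℂ` let `M f` be multiplication by `f ∘ wt`, so
that `‖M f (L γ s)‖ = √(∑' y, ‖f (wt y) * s (γ⁻¹ y)‖²)`.  Then the following are
equivalent: (i) for every `f` vanishing at infinity and every `s ∈ ℓ²(Γ)`,
`‖M f (L γ s)‖ → 0` as `l γ → ∞`; and (ii) `wt` has finite fibres. -/
theorem statement4 {Γ : Type*} [Group Γ] [Countable Γ]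
    (l : Γ → ℝ) (hl_nonneg : ∀ γ, 0 ≤ l γ)
    (hl_zero : ∀ γ, l γ = 0 ↔ γ = 1)
    (hl_sub : ∀ γ₁ γ₂, l (γ₁ * γ₂) ≤ l γ₁ + l γ₂)
    (hl_inv : ∀ γ, l γ⁻¹ = l γ)
    (hl_proper : ∀ C : ℝ, {γ : Γ | l γ ≤ C}.Finite)
    (d : ℕ) (hd : 1 ≤ d) (wt : Γ → (Fin d → ℤ)) :
    (∀ f : (Fin d → ℤ) → ℂ, Filter.Tendsto f Filter.cofinite (nhds 0) →
      ∀ s : Γ → ℂ, Memℓp s 2 →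
        ∀ ε > 0, ∃ n : ℝ, ∀ γ : Γ, l γ > n →
          Real.sqrt (∑' y : Γ, ‖f (wt y) * s (γ⁻¹ * y)‖ ^ 2) < ε) ↔
    (∀ m : Fin d → ℤ, (wt ⁻¹' {m}).Finite) := by
  classical
  have hbdd : ∀ S : Set Γ, S.Finite → ∃ C : ℝ, ∀ x ∈ S, l x ≤ C := by
    intro S hS
    obtain ⟨C, hC⟩ := (hS.image l).bddAbove
    exact ⟨C, fun x hx => hC (Set.mem_image_of_mem l hx)⟩
  constructor
  · intro H m
    by_contra hinf
    set f : (Fin d → ℤ) → ℂ := fun x => if x = m then 1 else 0 with hf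
    have hften : Filter.Tendsto f Filter.cofinite (nhds 0) := by
      have heq : (fun _ : Fin d → ℤ => (0:ℂ)) =ᶠ[Filter.cofinite] f := by
        rw [Filter.eventuallyEq_iff_exists_mem]
        refine ⟨{m}ᶜ, ?_, ?_⟩
        · rw [Filter.mem_cofinite, compl_compl]
          exact Set.finite_singleton m
        · intro x hx
          simp only [Set.mem_compl_iff, Set.mem_singleton_iff] at hx
          simp [hf, hx]
      exact Filter.Tendsto.congr' heq tendsto_const_nhds
    set s : Γ → ℂ := fun y => if y = 1 then 1 else 0 with hs
    have hsmem : Memℓp s 2 := by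
      apply memℓp_gen
      apply summable_of_ne_finset_zero (s := {(1 : Γ)})
      intro y hy
      simp only [Finset.mem_singleton] at hy
      simp [hs, hy]
    obtain ⟨n, hn⟩ := H f hften s hsmem (1/2) (by norm_num)
    have hexists : ∃ γ ∈ wt ⁻¹' {m}, l γ > n := by
      by_contra h
      push_neg at h
      exact hinf ((hl_proper n).subset h)
    obtain ⟨γ, hγm, hγl⟩ := hexists
    have hval := hn γ hγl
    have hts : (∑' y : Γ, ‖f (wt y) * s (γ⁻¹ * y)‖ ^ 2) = 1 := by
      rw [tsum_eq_single γ]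
      · have h1 : wt γ = m := hγm
        have h2 : γ⁻¹ * γ = 1 := inv_mul_cancel γ
        norm_num [hf, hs, h1, h2]
      · intro y hy
        have h3 : γ⁻¹ * y ≠ 1 := fun h => hy (inv_mul_eq_one.mp h).symm
        simp [hs, if_neg h3]
    rw [hts, Real.sqrt_one] at hval
    linarith
  · intro hfib f hf s hsmem ε hε
    -- f is bounded
    obtain ⟨B, hB1, hB⟩ : ∃ B : ℝ, 1 ≤ B ∧ ∀ x, ‖f x‖ ≤ B := by
      have hfin : {x | (1:ℝ) ≤ ‖f x‖}.Finite := by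
        have h01 := Filter.tendsto_def.mp hf (Metric.ball 0 1) (Metric.ball_mem_nhds 0 one_pos)
        rw [Filter.mem_cofinite] at h01
        apply h01.subset
        intro x hx
        simp only [Set.mem_compl_iff, Set.mem_preimage, Metric.mem_ball, dist_zero_right, not_lt]
        exact hx
      obtain ⟨C, hC⟩ := (hfin.image fun x => ‖f x‖).bddAbove
      refine ⟨max 1 C, le_max_left _ _, fun x => ?_⟩
      by_cases hx : (1:ℝ) ≤ ‖f x‖
      · exact le_max_of_le_right (hC (Set.mem_image_of_mem _ hx))
      · exact le_max_of_le_left (le_of_lt (not_le.mp hx))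
    have hBpos : 0 < B := lt_of_lt_of_le one_pos hB1
    -- g = f ∘ wt tends to 0 on cofinite Γ
    have hwt : Filter.Tendsto wt Filter.cofinite Filter.cofinite := by
      rw [Filter.tendsto_def]
      intro U hU
      rw [Filter.mem_cofinite] at hU ⊢
      have h1 : (wt ⁻¹' U)ᶜ = wt ⁻¹' Uᶜ := by ext y; simp
      have h2 : wt ⁻¹' Uᶜ = ⋃ x ∈ Uᶜ, wt ⁻¹' {x} := by ext y; simp
      rw [h1, h2]
      exact Set.Finite.biUnion hU fun x _ => hfib x
    have hg : Filter.Tendsto (fun y => f (wt y)) Filter.cofinite (nhds 0) := hf.comp hwt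
    -- summability of |s|^2
    have hsum : Summable fun x : Γ => ‖s x‖ ^ 2 := by
      have := hsmem.summable (p := 2) (by norm_num)
      simpa using this
    set T : ℝ := ∑' x : Γ, ‖s x‖ ^ 2 with hT
    have hTnn : (0:ℝ) ≤ T := tsum_nonneg fun x => sq_nonneg _
    -- choose finite F with tail < ε^2 / (2 B^2)
    have hδpos : 0 < ε ^ 2 / (2 * B ^ 2) := by positivity
    obtain ⟨F, hF⟩ : ∃ F : Finset Γ,
        (∑' x : {x : Γ // x ∉ F}, ‖s (x:Γ)‖ ^ 2) < ε ^ 2 / (2 * B ^ 2) :=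
      ((tendsto_order.1 (tendsto_tsum_compl_atTop_zero fun x : Γ => ‖s x‖ ^ 2)).2 _ hδpos).exists
    -- choose η with η^2 * (T+1) = ε^2/2
    have hT1pos : (0:ℝ) < T + 1 := by linarith
    set η : ℝ := ε / Real.sqrt (2 * (T + 1)) with hη
    have hηpos : 0 < η := div_pos hε (Real.sqrt_pos.mpr (by linarith))
    have hη2 : η ^ 2 * (T + 1) = ε ^ 2 / 2 := by
      rw [hη, div_pow, Real.sq_sqrt (by linarith : (0:ℝ) ≤ 2 * (T + 1))]
      field_simp
    -- K = points where |f ∘ wt| ≥ η is finite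
    have hK : {y : Γ | η ≤ ‖f (wt y)‖}.Finite := by
      have h01 := Filter.tendsto_def.mp hg (Metric.ball 0 η) (Metric.ball_mem_nhds 0 hηpos)
      rw [Filter.mem_cofinite] at h01
      apply h01.subset
      intro y hy
      simp only [Set.mem_compl_iff, Set.mem_preimage, Metric.mem_ball, dist_zero_right, not_lt]
      exact hy
    obtain ⟨CK, hCK⟩ := hbdd _ hK
    obtain ⟨CF, hCF⟩ := hbdd (F : Set Γ) F.finite_toSet
    refine ⟨CK + CF, fun γ hγ => ?_⟩
    -- summability of the summand after reindexing
    have hterm_le : ∀ x : Γ, ‖f (wt (γ * x)) * s x‖ ^ 2 ≤ B ^ 2 * ‖s x‖ ^ 2 := by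
      intro x
      rw [norm_mul, mul_pow]
      apply mul_le_mul_of_nonneg_right _ (sq_nonneg _)
      exact pow_le_pow_left₀ (norm_nonneg _) (hB _) 2
    have hsummand : Summable fun x : Γ => ‖f (wt (γ * x)) * s x‖ ^ 2 :=
      Summable.of_nonneg_of_le (fun x => sq_nonneg _) hterm_le (hsum.mul_left (B ^ 2))
    -- reindex
    have hre : (∑' y : Γ, ‖f (wt y) * s (γ⁻¹ * y)‖ ^ 2)
        = ∑' x : Γ, ‖f (wt (γ * x)) * s x‖ ^ 2 := by
      rw [← (Equiv.mulLeft γ).tsum_eq (fun y => ‖f (wt y) * s (γ⁻¹ * y)‖ ^ 2)]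
      apply tsum_congr
      intro x
      simp [Equiv.mulLeft, inv_mul_cancel_left]
    -- on F, |f(wt(γx))| < η
    have hsmall : ∀ x ∈ F, ‖f (wt (γ * x))‖ < η := by
      intro x hxF
      by_contra h
      push_neg at h
      have hmem : γ * x ∈ {y : Γ | η ≤ ‖f (wt y)‖} := h
      have h1 : l (γ * x) ≤ CK := hCK _ hmem
      have h2 : l γ ≤ l (γ * x) + l x := by
        have := hl_sub (γ * x) x⁻¹
        rw [mul_inv_cancel_right, hl_inv] at this
        exact this
      have h3 : l x ≤ CF := hCF x hxF
      linarith
    -- bound on the F part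
    have hFsum : ∑ x ∈ F, ‖f (wt (γ * x)) * s x‖ ^ 2 ≤ η ^ 2 * T := by
      calc ∑ x ∈ F, ‖f (wt (γ * x)) * s x‖ ^ 2
          ≤ ∑ x ∈ F, η ^ 2 * ‖s x‖ ^ 2 := by
            apply Finset.sum_le_sum
            intro x hx
            rw [norm_mul, mul_pow]
            apply mul_le_mul_of_nonneg_right _ (sq_nonneg _)
            exact pow_le_pow_left₀ (norm_nonneg _) (le_of_lt (hsmall x hx)) 2
        _ = η ^ 2 * ∑ x ∈ F, ‖s x‖ ^ 2 := by rw [Finset.mul_sum]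
        _ ≤ η ^ 2 * T :=
            mul_le_mul_of_nonneg_left (Summable.sum_le_tsum F (fun x _ => sq_nonneg _) hsum)
              (sq_nonneg _)
    -- bound on the tail part
    have htail : (∑' x : {x : Γ // x ∉ F}, ‖f (wt (γ * (x:Γ))) * s (x:Γ)‖ ^ 2)
        ≤ B ^ 2 * ∑' x : {x : Γ // x ∉ F}, ‖s (x:Γ)‖ ^ 2 := by
      rw [← tsum_mul_left]
      exact Summable.tsum_le_tsum (fun x => hterm_le x) (hsummand.subtype _)
        ((hsum.mul_left (B ^ 2)).subtype _)
    -- combine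
    have hsplit := Summable.sum_add_tsum_subtype_compl hsummand F
    have htotal : (∑' x : Γ, ‖f (wt (γ * x)) * s x‖ ^ 2) < ε ^ 2 := by
      rw [← hsplit]
      have h1 : ∑ x ∈ F, ‖f (wt (γ * x)) * s x‖ ^ 2 ≤ ε ^ 2 / 2 := by
        refine hFsum.trans ?_
        rw [← hη2]
        apply mul_le_mul_of_nonneg_left _ (sq_nonneg _)
        linarith
      have h2 : (∑' x : {x : Γ // x ∉ F}, ‖f (wt (γ * (x:Γ))) * s (x:Γ)‖ ^ 2) < ε ^ 2 / 2 := by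
        refine htail.trans_lt ?_
        calc B ^ 2 * ∑' x : {x : Γ // x ∉ F}, ‖s (x:Γ)‖ ^ 2
            < B ^ 2 * (ε ^ 2 / (2 * B ^ 2)) := by
              apply mul_lt_mul_of_pos_left hF (by positivity)
          _ = ε ^ 2 / 2 := by field_simp
      linarith
    rw [hre]
    exact (Real.sqrt_lt' hε).mpr htotal
end

section
/- Every smooth function g : ℝ² → ℂ satisfying g(x, y+1) = g(x, y) for all (x,y) ∈ ℝ², with ∫_ℝ ∫_0^1 |g(x,y)|² dy dx < ∞, and satisfying the equation ∂g/∂x − i·∂g/∂y = 2πx·g on ℝ², is identically zero. -/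
open MeasureTheory ContinuousMap Set
open scoped Real ENNReal

noncomputable def eker (n : ℤ) (y : ℝ) : ℂ :=
  Complex.exp (2 * (Real.pi : ℂ) * Complex.I * (-n : ℤ) * y)

lemma eker_continuous (n : ℤ) : Continuous (eker n) := by
  unfold eker
  exact Complex.continuous_exp.comp (continuous_const.mul Complex.continuous_ofReal)

lemma eker_norm (n : ℤ) (y : ℝ) : ‖eker n y‖ = 1 := by
  unfold eker
  have h : (2 * (Real.pi : ℂ) * Complex.I * (-n : ℤ) * y)
      = ((2 * Real.pi * (-n : ℤ) * y : ℝ) : ℂ) * Complex.I := by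
    push_cast; ring
  rw [h, Complex.norm_exp_ofReal_mul_I]

lemma eker_hasDerivAt (n : ℤ) (y : ℝ) :
    HasDerivAt (eker n) ((2 * (Real.pi : ℂ) * Complex.I * (-n : ℤ)) * eker n y) y := by
  have h1 : HasDerivAt (fun y : ℝ => (y : ℂ)) 1 y := Complex.ofRealCLM.hasDerivAt
  have h2 := h1.const_mul (2 * (Real.pi : ℂ) * Complex.I * (-n : ℤ))
  have h3 := h2.cexp
  simp only [mul_one] at h3
  unfold eker
  convert h3 using 1
  ring

lemma eker_zero (n : ℤ) : eker n 0 = 1 := by simp [eker]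

lemma eker_one (n : ℤ) : eker n 1 = 1 := by
  unfold eker
  have h : (2 * (Real.pi : ℂ) * Complex.I * (-n : ℤ) * (1:ℝ))
      = (-n : ℤ) * (2 * Real.pi * Complex.I) := by push_cast; ring
  rw [h]
  exact Complex.exp_int_mul_two_pi_mul_I (-n)

section partials
variable {g : ℝ × ℝ → ℂ}

lemma hasDerivAt_fst (hsmooth : ContDiff ℝ (⊤ : ℕ∞) g) (x y : ℝ) :
    HasDerivAt (fun t => g (t, y)) (fderiv ℝ g (x, y) (1, 0)) x := by
  have hg : HasFDerivAt g (fderiv ℝ g (x, y)) (x, y) :=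
    (hsmooth.differentiable (by simp) (x, y)).hasFDerivAt
  have hline : HasDerivAt (fun t : ℝ => (t, y)) ((1 : ℝ), (0 : ℝ)) x :=
    (hasDerivAt_id x).prodMk (hasDerivAt_const x y)
  exact hg.comp_hasDerivAt x hline

lemma hasDerivAt_snd (hsmooth : ContDiff ℝ (⊤ : ℕ∞) g) (x y : ℝ) :
    HasDerivAt (fun t => g (x, t)) (fderiv ℝ g (x, y) (0, 1)) y := by
  have hg : HasFDerivAt g (fderiv ℝ g (x, y)) (x, y) :=
    (hsmooth.differentiable (by simp) (x, y)).hasFDerivAt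
  have hline : HasDerivAt (fun t : ℝ => (x, t)) ((0 : ℝ), (1 : ℝ)) y :=
    (hasDerivAt_const y x).prodMk (hasDerivAt_id y)
  exact hg.comp_hasDerivAt y hline

lemma cont_gx (hsmooth : ContDiff ℝ (⊤ : ℕ∞) g) : Continuous (fun p => fderiv ℝ g p (1, 0)) :=
  (hsmooth.continuous_fderiv (by simp)).clm_apply continuous_const

lemma cont_gy (hsmooth : ContDiff ℝ (⊤ : ℕ∞) g) : Continuous (fun p => fderiv ℝ g p (0, 1)) :=
  (hsmooth.continuous_fderiv (by simp)).clm_apply continuous_const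

end partials

lemma cont_slice {g : ℝ × ℝ → ℂ} (hg : Continuous g) (x : ℝ) :
    Continuous (fun y => g (x, y)) :=
  hg.comp (continuous_const.prodMk continuous_id)

lemma deriv_under_integral {g : ℝ × ℝ → ℂ} (hsmooth : ContDiff ℝ (⊤ : ℕ∞) g) (n : ℤ) (x₀ : ℝ) :
    HasDerivAt (fun x => ∫ y in (0:ℝ)..1, eker n y * g (x, y))
      (∫ y in (0:ℝ)..1, eker n y * fderiv ℝ g (x₀, y) (1, 0)) x₀ := by
  set gx : ℝ × ℝ → ℂ := fun p => fderiv ℝ g p (1, 0) with hgx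
  have hgxc : Continuous gx := cont_gx hsmooth
  have hgc : Continuous g := hsmooth.continuous
  -- bound on compact set
  have hK : IsCompact (Icc (x₀ - 1) (x₀ + 1) ×ˢ Icc (0:ℝ) 1) :=
    isCompact_Icc.prod isCompact_Icc
  obtain ⟨M, hM⟩ := hK.exists_bound_of_continuousOn hgxc.continuousOn
  have key := intervalIntegral.hasDerivAt_integral_of_dominated_loc_of_deriv_le
    (F := fun x y => eker n y * g (x, y)) (F' := fun x y => eker n y * gx (x, y))
    (bound := fun _ => M) (a := (0:ℝ)) (b := 1) (x₀ := x₀) (μ := volume)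
    (Metric.ball_mem_nhds x₀ one_pos)
    (Filter.Eventually.of_forall fun x =>
      (((eker_continuous n).mul (cont_slice hgc x)).aestronglyMeasurable))
    (((eker_continuous n).mul (cont_slice hgc x₀)).intervalIntegrable 0 1)
    (((eker_continuous n).mul (cont_slice hgxc x₀)).aestronglyMeasurable)
    (Filter.Eventually.of_forall fun t ht x hx => by
      rw [norm_mul, eker_norm, one_mul]
      apply hM
      constructor
      · have := Metric.mem_ball.mp hx
        rw [Real.dist_eq] at this
        have h1 := abs_lt.mp this
        constructor <;> [linarith [h1.1]; linarith [h1.2]]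
      · have ht' : t ∈ Ioc (0:ℝ) 1 := by
          simpa [Set.uIoc_of_le (zero_le_one (α := ℝ))] using ht
        exact ⟨ht'.1.le, ht'.2⟩)
    (intervalIntegrable_const)
    (Filter.Eventually.of_forall fun t ht x hx =>
      (hasDerivAt_fst hsmooth x t).const_mul (eker n t))
  exact key.2

lemma ibp {g : ℝ × ℝ → ℂ} (hsmooth : ContDiff ℝ (⊤ : ℕ∞) g)
    (hper : ∀ p : ℝ × ℝ, g (p.1, p.2 + 1) = g p) (n : ℤ) (x₀ : ℝ) :
    ∫ y in (0:ℝ)..1, eker n y * fderiv ℝ g (x₀, y) (0, 1)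
      = (2 * (Real.pi : ℂ) * Complex.I * (n : ℤ)) * ∫ y in (0:ℝ)..1, eker n y * g (x₀, y) := by
  have hgyc : Continuous (fun p : ℝ × ℝ => fderiv ℝ g p (0, 1)) := cont_gy hsmooth
  have h := intervalIntegral.integral_mul_deriv_eq_deriv_mul
    (u := eker n) (v := fun y => g (x₀, y))
    (u' := fun y => (2 * (Real.pi : ℂ) * Complex.I * (-n : ℤ)) * eker n y)
    (v' := fun y => fderiv ℝ g (x₀, y) (0, 1))
    (fun y _ => eker_hasDerivAt n y)
    (fun y _ => hasDerivAt_snd hsmooth x₀ y)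
    ((continuous_const.mul (eker_continuous n)).intervalIntegrable 0 1)
    ((cont_slice hgyc x₀).intervalIntegrable 0 1)
  rw [h, eker_one, eker_zero]
  simp only [one_mul]
  have hbd : g (x₀, 1) = g (x₀, 0) := by simpa using hper (x₀, 0)
  rw [hbd]
  simp only [sub_self, zero_sub]
  have : (∫ y in (0:ℝ)..1, (2 * (Real.pi : ℂ) * Complex.I * (-n : ℤ)) * eker n y * g (x₀, y))
      = (2 * (Real.pi : ℂ) * Complex.I * (-n : ℤ)) * ∫ y in (0:ℝ)..1, eker n y * g (x₀, y) := by
    rw [← intervalIntegral.integral_const_mul]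
    congr 1; ext y; ring
  rw [this]
  push_cast
  ring

lemma hasDerivAt_c {g : ℝ × ℝ → ℂ} (hsmooth : ContDiff ℝ (⊤ : ℕ∞) g)
    (hper : ∀ p : ℝ × ℝ, g (p.1, p.2 + 1) = g p)
    (heq : ∀ p : ℝ × ℝ, fderiv ℝ g p (1, 0) - Complex.I * fderiv ℝ g p (0, 1)
      = (2 * (Real.pi : ℂ) * (p.1 : ℂ)) * g p) (n : ℤ) (x₀ : ℝ) :
    HasDerivAt (fun x => ∫ y in (0:ℝ)..1, eker n y * g (x, y))
      ((2 * (Real.pi : ℂ) * x₀ - 2 * Real.pi * n) * ∫ y in (0:ℝ)..1, eker n y * g (x₀, y)) x₀ := by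
  have h := deriv_under_integral hsmooth n x₀
  have hgyc : Continuous (fun p : ℝ × ℝ => fderiv ℝ g p (0, 1)) := cont_gy hsmooth
  have hgc : Continuous g := hsmooth.continuous
  have hsplit : (∫ y in (0:ℝ)..1, eker n y * fderiv ℝ g (x₀, y) (1, 0))
      = Complex.I * (∫ y in (0:ℝ)..1, eker n y * fderiv ℝ g (x₀, y) (0, 1))
        + (2 * (Real.pi : ℂ) * x₀) * ∫ y in (0:ℝ)..1, eker n y * g (x₀, y) := by
    have h1 : ∀ y : ℝ, eker n y * fderiv ℝ g (x₀, y) (1, 0)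
        = Complex.I * (eker n y * fderiv ℝ g (x₀, y) (0, 1))
          + (2 * (Real.pi : ℂ) * x₀) * (eker n y * g (x₀, y)) := by
      intro y
      have h2 := heq (x₀, y)
      have h3 : fderiv ℝ g (x₀, y) (1, 0)
          = Complex.I * fderiv ℝ g (x₀, y) (0, 1) + (2 * (Real.pi : ℂ) * x₀) * g (x₀, y) := by
        rw [← h2]; ring
      rw [h3]; ring
    rw [intervalIntegral.integral_congr (g := fun y =>
        Complex.I * (eker n y * fderiv ℝ g (x₀, y) (0, 1))
          + (2 * (Real.pi : ℂ) * x₀) * (eker n y * g (x₀, y))) (fun y _ => h1 y)]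
    rw [intervalIntegral.integral_add
      ((show Continuous fun y => Complex.I * (eker n y * fderiv ℝ g (x₀, y) (0, 1)) from continuous_const.mul ((eker_continuous n).mul (cont_slice hgyc x₀))).intervalIntegrable 0 1)
      ((show Continuous fun y => (2 * (Real.pi : ℂ) * x₀) * (eker n y * g (x₀, y)) from continuous_const.mul ((eker_continuous n).mul (cont_slice hgc x₀))).intervalIntegrable 0 1),
      intervalIntegral.integral_const_mul, intervalIntegral.integral_const_mul]
  rw [hsplit, ibp hsmooth hper n x₀] at h
  have hrw : Complex.I * (2 * (Real.pi : ℂ) * Complex.I * (n : ℤ)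
        * ∫ y in (0:ℝ)..1, eker n y * g (x₀, y))
      + (2 * (Real.pi : ℂ) * x₀) * ∫ y in (0:ℝ)..1, eker n y * g (x₀, y)
      = (2 * (Real.pi : ℂ) * x₀ - 2 * Real.pi * n) * ∫ y in (0:ℝ)..1, eker n y * g (x₀, y) := by
    push_cast
    linear_combination (2 * (Real.pi : ℂ) * n * ∫ y in (0:ℝ)..1, eker n y * g (x₀, y)) * Complex.I_sq
  rw [hrw] at h
  exact h

lemma ode_solution {c : ℝ → ℂ} {n : ℤ}
    (hc : ∀ x, HasDerivAt c ((2 * (Real.pi : ℂ) * x - 2 * Real.pi * n) * c x) x) (x : ℝ) :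
    c x = c 0 * Complex.exp ((Real.pi * x ^ 2 - 2 * Real.pi * n * x : ℝ) : ℂ) := by
  set φ : ℝ → ℝ := fun x => Real.pi * x ^ 2 - 2 * Real.pi * n * x with hφ
  have hφ' : ∀ x, HasDerivAt φ (2 * Real.pi * x - 2 * Real.pi * n) x := by
    intro x
    have h1 : HasDerivAt (fun x : ℝ => x ^ 2) (2 * x) x := by
      simpa using hasDerivAt_pow 2 x
    have h2 := (h1.const_mul Real.pi).sub ((hasDerivAt_id x).const_mul (2 * Real.pi * n))
    refine h2.congr_deriv ?_
    ring
  set u : ℝ → ℂ := fun x => c x * Complex.exp (-((φ x : ℝ) : ℂ)) with hu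
  have hE : ∀ x, HasDerivAt (fun x => Complex.exp (-((φ x : ℝ) : ℂ)))
      (Complex.exp (-((φ x : ℝ) : ℂ)) * (-((2 * Real.pi * x - 2 * Real.pi * n : ℝ) : ℂ))) x := by
    intro x
    have h3 : HasDerivAt (fun x : ℝ => -((φ x : ℝ) : ℂ))
        ((-(2 * Real.pi * x - 2 * Real.pi * n) : ℝ) : ℂ) x := by
      have := ((hφ' x).neg).ofReal_comp
      simpa using this
    have := h3.cexp
    convert this using 1
    push_cast
    ring
  have hu' : ∀ x, HasDerivAt u 0 x := by
    intro x
    have := (hc x).mul (hE x)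
    refine this.congr_deriv ?_
    push_cast
    ring
  have hconst : u x = u 0 :=
    is_const_of_deriv_eq_zero (fun x => (hu' x).differentiableAt) (fun x => (hu' x).deriv) x 0
  have hzero : φ 0 = 0 := by simp [hφ]
  have hx : c x * Complex.exp (-((φ x : ℝ) : ℂ)) = c 0 := by
    have := hconst
    simp only [hu, hzero] at this
    simpa using this
  have hne : Complex.exp (-((φ x : ℝ) : ℂ)) ≠ 0 := Complex.exp_ne_zero _
  calc c x = c x * Complex.exp (-((φ x : ℝ) : ℂ)) * Complex.exp (((φ x : ℝ) : ℂ)) := by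
        rw [mul_assoc, ← Complex.exp_add]
        simp
    _ = c 0 * Complex.exp (((φ x : ℝ) : ℂ)) := by rw [hx]

lemma tonelli_split {g : ℝ × ℝ → ℂ} (hgc : Continuous g) :
    (∫⁻ p in Set.univ ×ˢ Set.Ioo (0 : ℝ) 1, ENNReal.ofReal (‖g p‖ ^ 2))
      = ∫⁻ x : ℝ, ∫⁻ y in Set.Ioo (0:ℝ) 1, ENNReal.ofReal (‖g (x, y)‖ ^ 2) := by
  have hmeas : AEMeasurable (fun p : ℝ × ℝ => ENNReal.ofReal (‖g p‖ ^ 2))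
      ((volume : Measure ℝ).prod ((volume : Measure ℝ).restrict (Set.Ioo 0 1))) :=
    (ENNReal.measurable_ofReal.comp ((hgc.norm.pow 2).measurable)).aemeasurable
  rw [MeasureTheory.Measure.volume_eq_prod, ← Measure.prod_restrict, Measure.restrict_univ]
  exact MeasureTheory.lintegral_prod _ hmeas

lemma slice_bound {g : ℝ × ℝ → ℂ} (hgc : Continuous g) (n : ℤ) (x : ℝ) :
    ENNReal.ofReal (‖∫ y in (0:ℝ)..1, eker n y * g (x, y)‖ ^ 2)
      ≤ ∫⁻ y in Set.Ioo (0:ℝ) 1, ENNReal.ofReal (‖g (x, y)‖ ^ 2) := by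
  set f : ℝ → ℝ := fun y => ‖g (x, y)‖ with hf
  have hfc : Continuous f := (cont_slice hgc x).norm
  -- step 1 : norm of integral ≤ integral of norm
  have h1 : ‖∫ y in (0:ℝ)..1, eker n y * g (x, y)‖ ≤ ∫ y in (0:ℝ)..1, f y := by
    refine le_trans (intervalIntegral.norm_integral_le_integral_norm zero_le_one) ?_
    refine le_of_eq (intervalIntegral.integral_congr fun y _ => ?_)
    rw [norm_mul, eker_norm, one_mul]
  -- step 2 : real integral as lintegral over Ioo
  have h2 : ENNReal.ofReal (∫ y in (0:ℝ)..1, f y)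
      = ∫⁻ y in Set.Ioo (0:ℝ) 1, ENNReal.ofReal (f y) := by
    rw [intervalIntegral.integral_of_le zero_le_one]
    rw [← setLIntegral_congr (Ioo_ae_eq_Ioc (μ := (volume : Measure ℝ)) (a := (0:ℝ)) (b := 1)).symm]
    exact ofReal_integral_eq_lintegral_ofReal
      hfc.integrableOn_Ioc ((ae_of_all _ fun y => norm_nonneg _))
  -- step 3 : Cauchy–Schwarz
  set μ := (volume : Measure ℝ).restrict (Set.Ioo (0:ℝ) 1) with hμ
  have hconj : Real.HolderConjugate 2 2 := Real.HolderConjugate.two_two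
  have hmeas : AEMeasurable (fun y => ENNReal.ofReal (f y)) μ :=
    (ENNReal.measurable_ofReal.comp hfc.measurable).aemeasurable
  have hcs := ENNReal.lintegral_mul_le_Lp_mul_Lq μ hconj hmeas
    (aemeasurable_const (b := (1:ℝ≥0∞)))
  simp only [Pi.mul_apply, mul_one, ENNReal.one_rpow] at hcs
  have hμ1 : μ Set.univ = 1 := by
    simp [hμ, Real.volume_Ioo]
  rw [lintegral_const, hμ1, mul_one, ENNReal.one_rpow, mul_one] at hcs
  -- combine
  set A := ∫⁻ y, (ENNReal.ofReal (f y)) ^ (2:ℝ) ∂μ with hA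
  have hstep : ENNReal.ofReal (‖∫ y in (0:ℝ)..1, eker n y * g (x, y)‖ ^ 2) ≤ A := by
    have hc1 : ENNReal.ofReal (‖∫ y in (0:ℝ)..1, eker n y * g (x, y)‖ ^ 2)
        = (ENNReal.ofReal ‖∫ y in (0:ℝ)..1, eker n y * g (x, y)‖) ^ (2:ℝ) := by
      rw [ENNReal.ofReal_rpow_of_nonneg (norm_nonneg _) (by norm_num)]
      norm_num
    rw [hc1]
    have hc2 : (ENNReal.ofReal ‖∫ y in (0:ℝ)..1, eker n y * g (x, y)‖) ^ (2:ℝ)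
        ≤ (ENNReal.ofReal (∫ y in (0:ℝ)..1, f y)) ^ (2:ℝ) :=
      ENNReal.rpow_le_rpow (ENNReal.ofReal_le_ofReal h1) (by norm_num)
    refine hc2.trans ?_
    rw [h2]
    calc (∫⁻ y in Set.Ioo (0:ℝ) 1, ENNReal.ofReal (f y)) ^ (2:ℝ)
        ≤ (A ^ ((1:ℝ)/2)) ^ (2:ℝ) := ENNReal.rpow_le_rpow hcs (by norm_num)
      _ = A := by rw [← ENNReal.rpow_mul]; norm_num
  refine hstep.trans (le_of_eq ?_)
  refine lintegral_congr fun y => ?_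
  rw [ENNReal.ofReal_rpow_of_nonneg (norm_nonneg _) (by norm_num)]
  norm_num


lemma norm_cexp_ofReal (r : ℝ) : ‖Complex.exp ((r : ℝ) : ℂ)‖ = Real.exp r := by
  rw [Complex.norm_exp]
  simp

lemma coeff_eq_zero {g : ℝ × ℝ → ℂ} (hsmooth : ContDiff ℝ (⊤ : ℕ∞) g)
    (hper : ∀ p : ℝ × ℝ, g (p.1, p.2 + 1) = g p)
    (hL2 : (∫⁻ p in Set.univ ×ˢ Set.Ioo (0 : ℝ) 1,
      ENNReal.ofReal (‖g p‖ ^ 2)) < ⊤)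
    (heq : ∀ p : ℝ × ℝ, fderiv ℝ g p (1, 0) - Complex.I * fderiv ℝ g p (0, 1)
      = (2 * (Real.pi : ℂ) * (p.1 : ℂ)) * g p) (n : ℤ) (x : ℝ) :
    ∫ y in (0:ℝ)..1, eker n y * g (x, y) = 0 := by
  set c : ℝ → ℂ := fun x => ∫ y in (0:ℝ)..1, eker n y * g (x, y) with hc
  have hODE : ∀ x, c x = c 0 * Complex.exp
      ((Real.pi * x ^ 2 - 2 * Real.pi * n * x : ℝ) : ℂ) :=
    ode_solution (fun x => hasDerivAt_c hsmooth hper heq n x)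
  suffices h0 : c 0 = 0 by
    rw [show (∫ y in (0:ℝ)..1, eker n y * g (x, y)) = c x from rfl, hODE x, h0, zero_mul]
  by_contra h0
  have hr : 0 < ‖c 0‖ ^ 2 := pow_pos (norm_pos_iff.mpr h0) 2
  set X : ℝ := 2 * |(n : ℝ)| + 1 with hX
  have hlower : ∀ x : ℝ, x ∈ Set.Ici X → ENNReal.ofReal (‖c 0‖ ^ 2)
      ≤ ENNReal.ofReal (‖c x‖ ^ 2) := by
    intro x hx
    apply ENNReal.ofReal_le_ofReal
    have hφ : (0:ℝ) ≤ Real.pi * x ^ 2 - 2 * Real.pi * n * x := by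
      have h1 : (2 * (n:ℝ)) ≤ 2 * |(n:ℝ)| := by
        have := le_abs_self (n:ℝ); linarith
      have hx' : X ≤ x := hx
      have hxpos : (1:ℝ) ≤ x := by
        have : (0:ℝ) ≤ |(n:ℝ)| := abs_nonneg _
        simp only [hX] at hx'; linarith
      have hx2n : 1 ≤ x - 2 * (n:ℝ) := by
        simp only [hX] at hx'; linarith
      have key : (0:ℝ) ≤ Real.pi * (x * (x - 2 * n)) :=
        mul_nonneg Real.pi_pos.le (mul_nonneg (by linarith) (by linarith))
      have hrw : Real.pi * x ^ 2 - 2 * Real.pi * n * x = Real.pi * (x * (x - 2 * n)) := by ring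
      linarith [key, hrw.ge, hrw.le]
    have hnorm : ‖c x‖ = ‖c 0‖ * Real.exp (Real.pi * x ^ 2 - 2 * Real.pi * n * x) := by
      rw [hODE x, norm_mul, norm_cexp_ofReal]
    rw [hnorm]
    have hexp : (1:ℝ) ≤ Real.exp (Real.pi * x ^ 2 - 2 * Real.pi * n * x) :=
      Real.one_le_exp hφ
    have hE2 : (1:ℝ) ≤ Real.exp (Real.pi * x ^ 2 - 2 * Real.pi * n * x) ^ 2 := by
      nlinarith
    have := mul_le_mul_of_nonneg_left hE2 (sq_nonneg ‖c 0‖)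
    nlinarith [this]
  have htop : (∫⁻ x : ℝ, ENNReal.ofReal (‖c x‖ ^ 2)) = ⊤ := by
    rw [eq_top_iff]
    calc (⊤:ℝ≥0∞) = ENNReal.ofReal (‖c 0‖ ^ 2) * volume (Set.Ici X) := by
          rw [Real.volume_Ici, ENNReal.mul_top]
          exact (ENNReal.ofReal_pos.mpr hr).ne'
      _ = ∫⁻ _ in Set.Ici X, ENNReal.ofReal (‖c 0‖ ^ 2) := (setLIntegral_const _ _).symm
      _ ≤ ∫⁻ x in Set.Ici X, ENNReal.ofReal (‖c x‖ ^ 2) :=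
          setLIntegral_mono' measurableSet_Ici hlower
      _ ≤ ∫⁻ x : ℝ, ENNReal.ofReal (‖c x‖ ^ 2) := setLIntegral_le_lintegral _ _
  have hle : (∫⁻ x : ℝ, ENNReal.ofReal (‖c x‖ ^ 2))
      ≤ ∫⁻ p in Set.univ ×ˢ Set.Ioo (0 : ℝ) 1, ENNReal.ofReal (‖g p‖ ^ 2) := by
    rw [tonelli_split hsmooth.continuous]
    exact lintegral_mono fun x => slice_bound hsmooth.continuous n x
  rw [htop] at hle
  exact absurd (lt_of_le_of_lt hle hL2) (lt_irrefl ⊤)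


lemma eq_zero_of_fourierCoeff_eq_zero (f : C(AddCircle (1:ℝ), ℂ))
    (h : ∀ n : ℤ, fourierCoeff (f : AddCircle (1:ℝ) → ℂ) n = 0) : ∀ t, f t = 0 := by
  haveI : Fact ((0:ℝ) < 1) := ⟨one_pos⟩
  set F := ContinuousMap.toLp (E := ℂ) 2 AddCircle.haarAddCircle ℂ f with hF
  have h0 : F = 0 := by
    have hrepr : (fourierBasis (T := 1)).repr F = 0 := by
      ext n
      rw [fourierBasis_repr, fourierCoeff_toLp]
      simpa using h n
    exact (fourierBasis (T := 1)).repr.map_eq_zero_iff.mp hrepr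
  have hae : (f : AddCircle (1:ℝ) → ℂ) =ᵐ[AddCircle.haarAddCircle] (fun _ => 0) := by
    have h1 : (F : AddCircle (1:ℝ) → ℂ) =ᵐ[AddCircle.haarAddCircle] f :=
      ContinuousMap.coeFn_toLp _ f
    have h2 : (F : AddCircle (1:ℝ) → ℂ) =ᵐ[AddCircle.haarAddCircle] (fun _ => 0) := by
      rw [h0]; exact Lp.coeFn_zero _ _ _
    exact h1.symm.trans h2
  have := (f.continuous.ae_eq_iff_eq AddCircle.haarAddCircle continuous_const).mp hae
  intro t; exact congrFun this t

/-- Every smooth function `g : ℝ² → ℂ` which is `1`-periodic in the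
second variable, square-integrable on the cylinder `ℝ × (0,1)`, and satisfies
`∂g/∂x − i·∂g/∂y = 2πx·g`, is identically zero. -/
theorem statement6 (g : ℝ × ℝ → ℂ) (hsmooth : ContDiff ℝ (⊤ : ℕ∞) g)
    (hper : ∀ p : ℝ × ℝ, g (p.1, p.2 + 1) = g p)
    (hL2 : (∫⁻ p in Set.univ ×ˢ Set.Ioo (0 : ℝ) 1,
      ENNReal.ofReal (‖g p‖ ^ 2)) < ⊤)
    (heq : ∀ p : ℝ × ℝ, fderiv ℝ g p (1, 0) - Complex.I * fderiv ℝ g p (0, 1)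
      = (2 * (Real.pi : ℂ) * (p.1 : ℂ)) * g p) :
    ∀ p : ℝ × ℝ, g p = 0 := by
  intro p
  haveI : Fact ((0:ℝ) < 1) := ⟨one_pos⟩
  have hper2 : Function.Periodic (fun y => g (p.1, y)) 1 := fun y => hper (p.1, y)
  have hcont : Continuous hper2.lift := by
    rw [(QuotientAddGroup.isQuotientMap_mk _).continuous_iff]
    exact cont_slice hsmooth.continuous p.1
  set F : C(AddCircle (1:ℝ), ℂ) := ⟨hper2.lift, hcont⟩ with hFdef
  have hfc : ∀ m : ℤ, fourierCoeff (⇑F) m = 0 := by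
    intro m
    rw [fourierCoeff_eq_intervalIntegral ⇑F m 0]
    have hint : (∫ y in (0:ℝ)..(0+1), fourier (-m) (y : AddCircle (1:ℝ)) • F (y : AddCircle (1:ℝ)))
        = ∫ y in (0:ℝ)..1, eker m y * g (p.1, y) := by
      rw [zero_add]
      refine intervalIntegral.integral_congr fun y _ => ?_
      rw [fourier_coe_apply]
      show _ • g (p.1, y) = _
      rw [smul_eq_mul]
      congr 1
      unfold eker
      push_cast
      rw [div_one]
    rw [hint, coeff_eq_zero hsmooth hper hL2 heq m p.1, smul_zero]
  have := eq_zero_of_fourierCoeff_eq_zero F hfc ((p.2 : ℝ) : AddCircle (1:ℝ))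
  have hFp : F ((p.2 : ℝ) : AddCircle (1:ℝ)) = g (p.1, p.2) := rfl
  rw [hFp] at this
  simpa using this
end

section
/- Let F_1, …, F_n be bounded linear operators on a complex Hilbert space H that are mutually orthogonal, i.e. F_j ∘ (F_k)* = 0 and (F_j)* ∘ F_k = 0 for all j ≠ k. For v ∈ H let v_k denote the orthogonal projection of v onto (ker F_k)ᗮ. Then F_k v = F_k v_k for each k, the vectors F_1 v_1, …, F_n v_n are pairwise orthogonal, and ‖Σ_{k=1}^n F_k v‖² = Σ_{k=1}^n ‖F_k v_k‖²; moreover Σ_{k=1}^n ‖v_k‖² ≤ ‖v‖², so that ‖Σ_{k=1}^n F_k v‖² ≤ (max_k ‖F_k‖²) · ‖v‖². -/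
private lemma pyth {H : Type*} [NormedAddCommGroup H] [InnerProductSpace ℂ H]
    {n : ℕ} (w : Fin n → H)
    (h : ∀ j k, j ≠ k → (inner ℂ (w j) (w k) : ℂ) = 0) :
    ‖∑ k, w k‖ ^ 2 = ∑ k, ‖w k‖ ^ 2 := by
  have key : (inner ℂ (∑ k, w k) (∑ k, w k) : ℂ) = ∑ k, (inner ℂ (w k) (w k) : ℂ) := by
    rw [sum_inner]
    rw [Finset.sum_congr rfl (fun j _ => inner_sum Finset.univ w (w j))]
    rw [Finset.sum_comm]
    refine Finset.sum_congr rfl fun k _ => ?_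
    rw [Finset.sum_eq_single k (fun j _ hj => h j k hj) (by simp)]
  calc ‖∑ k, w k‖ ^ 2
      = RCLike.re (inner ℂ (∑ k, w k) (∑ k, w k) : ℂ) := (inner_self_eq_norm_sq _).symm
    _ = RCLike.re (∑ k, (inner ℂ (w k) (w k) : ℂ)) := by rw [key]
    _ = ∑ k, RCLike.re (inner ℂ (w k) (w k) : ℂ) := map_sum _ _ _
    _ = ∑ k, ‖w k‖ ^ 2 := Finset.sum_congr rfl fun k _ => inner_self_eq_norm_sq _

/-- Let `F 1, …, F n` be mutually orthogonal bounded operators on a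
complex Hilbert space `H`.  For `v ∈ H` let `v k` be the orthogonal projection of `v`
onto `(ker (F k))ᗮ`.  Then `F k v = F k (v k)` for each `k`, the vectors
`F k (v k)` are pairwise orthogonal, `‖∑ k, F k v‖² = ∑ k, ‖F k (v k)‖²`, one has
`∑ k, ‖v k‖² ≤ ‖v‖²`, and consequently
`‖∑ k, F k v‖² ≤ (⨆ k, ‖F k‖²) · ‖v‖²`. -/
theorem statement8 {H : Type*} [NormedAddCommGroup H] [InnerProductSpace ℂ H]
    [CompleteSpace H] (n : ℕ) (hn : 0 < n) (F : Fin n → H →L[ℂ] H)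
    (horth : ∀ j k, j ≠ k →
      F j ∘L ContinuousLinearMap.adjoint (F k) = 0 ∧
      ContinuousLinearMap.adjoint (F j) ∘L F k = 0)
    (v : H) :
    (∀ k, F k v = F k (Submodule.orthogonalProjectionOnto (LinearMap.ker (F k : H →ₗ[ℂ] H))ᗮ v)) ∧
    (∀ j k, j ≠ k →
      (inner ℂ (F j (Submodule.orthogonalProjectionOnto (LinearMap.ker (F j : H →ₗ[ℂ] H))ᗮ v))
        (F k (Submodule.orthogonalProjectionOnto (LinearMap.ker (F k : H →ₗ[ℂ] H))ᗮ v)) : ℂ) = 0) ∧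
    ‖∑ k, F k v‖ ^ 2 =
      ∑ k, ‖F k (Submodule.orthogonalProjectionOnto (LinearMap.ker (F k : H →ₗ[ℂ] H))ᗮ v : H)‖ ^ 2 ∧
    ∑ k, ‖(Submodule.orthogonalProjectionOnto (LinearMap.ker (F k : H →ₗ[ℂ] H))ᗮ v : H)‖ ^ 2 ≤ ‖v‖ ^ 2 ∧
    ‖∑ k, F k v‖ ^ 2 ≤ (⨆ k, ‖F k‖ ^ 2) * ‖v‖ ^ 2 := by
  set vk : Fin n → H := fun k => (Submodule.orthogonalProjectionOnto (LinearMap.ker (F k : H →ₗ[ℂ] H))ᗮ v : H) with hvk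
  -- Part 1 : F k v = F k (vk k)
  have h1 : ∀ k, F k v = F k (vk k) := by
    intro k
    have hmem : v - vk k ∈ ((LinearMap.ker (F k : H →ₗ[ℂ] H))ᗮ)ᗮ :=
      Submodule.sub_starProjection_mem_orthogonal v
    rw [Submodule.orthogonal_orthogonal] at hmem
    have h0 : F k (v - vk k) = 0 := hmem
    rw [map_sub, sub_eq_zero] at h0
    exact h0
  -- Part 2 : pairwise orthogonality of the images
  have h2 : ∀ j k, j ≠ k → (inner ℂ (F j (vk j)) (F k (vk k)) : ℂ) = 0 := by
    intro j k hjk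
    rw [← h1 j, ← h1 k]
    have : (inner ℂ (F j v) (F k v) : ℂ)
        = inner ℂ v ((ContinuousLinearMap.adjoint (F j) ∘L F k) v) := by
      rw [ContinuousLinearMap.comp_apply, ContinuousLinearMap.adjoint_inner_right]
    rw [this, (horth j k hjk).2]
    simp
  -- Part 3 : Pythagoras for the images
  have h3 : ‖∑ k, F k v‖ ^ 2 = ∑ k, ‖F k (vk k)‖ ^ 2 := by
    rw [Finset.sum_congr rfl fun k _ => h1 k]
    exact pyth _ h2
  -- pairwise orthogonality of the vk
  have hsub : ∀ j k, j ≠ k → (LinearMap.ker (F j : H →ₗ[ℂ] H))ᗮ ≤ LinearMap.ker (F k : H →ₗ[ℂ] H) := by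
    intro j k hjk x hx
    have hz : ∀ z : H, (inner ℂ z (F k x) : ℂ) = 0 := by
      intro z
      have hzk : ContinuousLinearMap.adjoint (F k) z ∈ LinearMap.ker (F j : H →ₗ[ℂ] H) := by
        have : (F j ∘L ContinuousLinearMap.adjoint (F k)) z = 0 := by
          rw [(horth j k hjk).1]; rfl
        simpa using this
      calc (inner ℂ z (F k x) : ℂ)
          = inner ℂ (ContinuousLinearMap.adjoint (F k) z) x :=
            (ContinuousLinearMap.adjoint_inner_left _ _ _).symm
        _ = 0 := hx _ hzk
    have := hz (F k x)
    rw [inner_self_eq_zero] at this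
    exact this
  have hvorth : ∀ j k, j ≠ k → (inner ℂ (vk j) (vk k) : ℂ) = 0 := by
    intro j k hjk
    have hj : vk j ∈ LinearMap.ker (F k : H →ₗ[ℂ] H) := hsub j k hjk (Submodule.orthogonalProjectionOnto _ v).2
    exact ((Submodule.orthogonalProjectionOnto (LinearMap.ker (F k : H →ₗ[ℂ] H))ᗮ v).2 _ hj)
  -- inner v (vk k) = ‖vk k‖²
  have hinner : ∀ k, (inner ℂ v (vk k) : ℂ) = inner ℂ (vk k) (vk k) := by
    intro k
    have h0 : (inner ℂ (v - vk k) (vk k) : ℂ) = 0 :=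
      Submodule.starProjection_inner_eq_zero v _ (Submodule.orthogonalProjectionOnto _ v).2
    rw [inner_sub_left, sub_eq_zero] at h0
    exact h0
  -- Part 4 : Bessel-type inequality
  have h4 : ∑ k, ‖vk k‖ ^ 2 ≤ ‖v‖ ^ 2 := by
    set S : H := ∑ k, vk k with hS
    have hSnorm : ‖S‖ ^ 2 = ∑ k, ‖vk k‖ ^ 2 := pyth _ hvorth
    have hre : RCLike.re (inner ℂ v S : ℂ) = ∑ k, ‖vk k‖ ^ 2 := by
      rw [hS, inner_sum, map_sum]
      refine Finset.sum_congr rfl fun k _ => ?_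
      rw [hinner k]
      exact inner_self_eq_norm_sq _
    have hexp : ‖v - S‖ ^ 2 = ‖v‖ ^ 2 - 2 * RCLike.re (inner ℂ v S : ℂ) + ‖S‖ ^ 2 :=
      @norm_sub_sq ℂ _ _ _ _ v S
    nlinarith [sq_nonneg ‖v - S‖, hexp, hre, hSnorm]
  -- Part 5 : final estimate
  have h5 : ‖∑ k, F k v‖ ^ 2 ≤ (⨆ k, ‖F k‖ ^ 2) * ‖v‖ ^ 2 := by
    have hbdd : BddAbove (Set.range fun k => ‖F k‖ ^ 2) := Set.Finite.bddAbove (Set.finite_range _)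
    have hsup_le : ∀ k : Fin n, ‖F k‖ ^ 2 ≤ ⨆ k, ‖F k‖ ^ 2 := fun k => le_ciSup hbdd k
    have hsup_nonneg : 0 ≤ ⨆ k, ‖F k‖ ^ 2 :=
      le_trans (sq_nonneg _) (hsup_le ⟨0, hn⟩)
    calc ‖∑ k, F k v‖ ^ 2 = ∑ k, ‖F k (vk k)‖ ^ 2 := h3
      _ ≤ ∑ k, (⨆ j, ‖F j‖ ^ 2) * ‖vk k‖ ^ 2 := by
          refine Finset.sum_le_sum fun k _ => ?_
          have hle : ‖F k (vk k)‖ ≤ ‖F k‖ * ‖vk k‖ := (F k).le_opNorm _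
          have : ‖F k (vk k)‖ ^ 2 ≤ ‖F k‖ ^ 2 * ‖vk k‖ ^ 2 := by
            rw [← mul_pow]; exact pow_le_pow_left₀ (norm_nonneg _) hle 2
          exact le_trans this (mul_le_mul_of_nonneg_right (hsup_le k) (sq_nonneg _))
      _ = (⨆ j, ‖F j‖ ^ 2) * ∑ k, ‖vk k‖ ^ 2 := (Finset.mul_sum _ _ _).symm
      _ ≤ (⨆ j, ‖F j‖ ^ 2) * ‖v‖ ^ 2 := mul_le_mul_of_nonneg_left h4 hsup_nonneg
  exact ⟨h1, h2, h3, h4, h5⟩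
end
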